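/- arXiv:2207.02551 — 5 statements merged into one kernel-verified Lean document; each statement's English description precedes it below -/
import Mathlib

section
/- For any integer m≥2, any permutation π of {0,…,m−1}, constants c,c_i,c'∈Z_q (q even), the Boolean function g = (q/2)·Σ_{i=0}^{m−2} x_{π(i)}x_{π(i+1)} + Σ_{i=0}^{m−1} c_i x_i + c yields that the pair of length-2^m sequences (Ψ(g), Ψ(g + (q/2)x_{π(0)} + c')) is a Golay complementary pair, i.e., their aperiodic autocorrelation sums vanish at every nonzero shift. -/
/-!
Write `j = i + τ`. The `i`-th terms of the two autocorrelations add up to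
`ω ^ (g i - g j) * (1 + (-1) ^ (i_{π 0} + j_{π 0}))`, which vanishes unless `i` and `j` agree at
bit `π 0`. In that case let `v ≥ 1` be the first position along the path `π` at which they
differ, and flip bit `π (v - 1)` of both: as `i` and `j` agree there, the flipped `j` is the
flipped `i` plus `τ`, and the first difference is still at `v`, so this is an involution without
fixed points. Only the path edges at `π (v - 1)` change the exponent difference, and they change
it by `q / 2` times an odd number, so paired terms cancel.
-/

open Finset Complex

/-- ω = exp(2πi/q). -/
noncomputable def omegaq (q : ℕ) : ℂ := Complex.exp (2 * Real.pi * Complex.I / q)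

/-- Aperiodic cross-correlation of two length-`N` complex sequences at shift `τ`. -/
noncomputable def acorr (N : ℕ) (x y : ℕ → ℂ) (τ : ℕ) : ℂ :=
  ∑ i ∈ Finset.range (N - τ), x i * (starRingEnd ℂ) (y (i + τ))

/-- `k`-th binary digit of `i`. -/
def bit (i k : ℕ) : ℕ := (i / 2 ^ k) % 2

lemma bit_lt_two (x k : ℕ) : bit x k < 2 := Nat.mod_lt _ two_pos

lemma bit_eq_toNat_testBit (x k : ℕ) : bit x k = (x.testBit k).toNat := (Nat.toNat_testBit x k).symm

lemma bit_eq_bit_iff {x y k : ℕ} : bit x k = bit y k ↔ x.testBit k = y.testBit k := by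
  rw [bit_eq_toNat_testBit, bit_eq_toNat_testBit]
  cases x.testBit k <;> cases y.testBit k <;> simp

lemma bit_xor_two_pow_of_ne {k p : ℕ} (h : k ≠ p) (x : ℕ) : bit (x ^^^ 2 ^ p) k = bit x k := by
  simp [bit_eq_toNat_testBit, Ne.symm h]

lemma intCast_bit_xor_two_pow_self (x p : ℕ) : (bit (x ^^^ 2 ^ p) p : ℤ) = 1 - bit x p := by
  cases h : x.testBit p <;> simp [bit_eq_toNat_testBit, h]

lemma bit_xor_two_pow_eq_iff {x y k : ℕ} (p : ℕ) :
    bit (x ^^^ 2 ^ p) k = bit (y ^^^ 2 ^ p) k ↔ bit x k = bit y k := by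
  simp [bit_eq_bit_iff]

lemma intCast_xor_two_pow (x p : ℕ) : ((x ^^^ 2 ^ p : ℕ) : ℤ) = x + 2 ^ p * (1 - 2 * bit x p) := by
  have hdecomp : ∀ y : ℕ, y = 2 ^ (p + 1) * (y / 2 ^ (p + 1)) + 2 ^ p * bit y p + y % 2 ^ p := by
    intro y
    have := Nat.mod_pow_succ (x := y) (b := 2) (k := p)
    have := Nat.div_add_mod y (2 ^ (p + 1))
    simp only [bit]; omega
  have hhigh : (x ^^^ 2 ^ p) / 2 ^ (p + 1) = x / 2 ^ (p + 1) := by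
    rw [Nat.xor_div_two_pow, Nat.div_eq_of_lt (Nat.pow_lt_pow_succ one_lt_two), Nat.xor_zero]
  have hlow : (x ^^^ 2 ^ p) % 2 ^ p = x % 2 ^ p := by
    rw [Nat.xor_mod_two_pow, Nat.mod_self, Nat.xor_zero]
  have hx := hdecomp x
  have hy := hdecomp (x ^^^ 2 ^ p)
  rw [hhigh, hlow] at hy
  have hb := intCast_bit_xor_two_pow_self x p
  have := bit_lt_two x p
  zify at hx hy
  linear_combination hy - hx + 2 ^ p * hb

lemma xor_two_pow_add_of_bit_eq {x τ p : ℕ} (h : bit x p = bit (x + τ) p) :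
    (x ^^^ 2 ^ p) + τ = (x + τ) ^^^ 2 ^ p := by
  rw [← Nat.cast_inj (R := ℤ), Nat.cast_add, intCast_xor_two_pow, intCast_xor_two_pow, ← h]
  push_cast; ring

lemma xor_two_pow_ne_self (x p : ℕ) : x ^^^ 2 ^ p ≠ x := by
  intro h
  have h2 := intCast_bit_xor_two_pow_self x p
  rw [h] at h2
  omega

noncomputable def firstBitDiff (π : ℕ → ℕ) (x y : ℕ) : ℕ := sInf {v | bit x (π v) ≠ bit y (π v)}

section FirstBitDiff

variable {π : ℕ → ℕ}

lemma firstBitDiff_xor_two_pow (x y p : ℕ) :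
    firstBitDiff π (x ^^^ 2 ^ p) (y ^^^ 2 ^ p) = firstBitDiff π x y := by
  simp only [firstBitDiff, ne_eq, bit_xor_two_pow_eq_iff]

lemma bit_eq_of_lt_firstBitDiff {x y u : ℕ} (hu : u < firstBitDiff π x y) :
    bit x (π u) = bit y (π u) := by
  simpa using Nat.notMem_of_lt_sInf hu

lemma exists_bit_ne_of_ne {m x y : ℕ} (hπ : Set.SurjOn π (Set.Iio m) (Set.Iio m))
    (hx : x < 2 ^ m) (hy : y < 2 ^ m) (hxy : x ≠ y) : ∃ v < m, bit x (π v) ≠ bit y (π v) := by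
  contrapose! hxy
  refine Nat.eq_of_testBit_eq fun k ↦ ?_
  by_cases hk : k < m
  · obtain ⟨v, hv, rfl⟩ := hπ hk
    exact bit_eq_bit_iff.mp (hxy v hv)
  · rw [Nat.testBit_lt_two_pow (hx.trans_le (Nat.pow_le_pow_right two_pos (not_lt.mp hk))),
      Nat.testBit_lt_two_pow (hy.trans_le (Nat.pow_le_pow_right two_pos (not_lt.mp hk)))]

lemma firstBitDiff_lt_and_bit_ne {m x y : ℕ} (hπ : Set.SurjOn π (Set.Iio m) (Set.Iio m))
    (hx : x < 2 ^ m) (hy : y < 2 ^ m) (hxy : x ≠ y) :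
    firstBitDiff π x y < m ∧ bit x (π (firstBitDiff π x y)) ≠ bit y (π (firstBitDiff π x y)) := by
  obtain ⟨v, hvm, hv⟩ := exists_bit_ne_of_ne hπ hx hy hxy
  exact ⟨(Nat.sInf_le hv).trans_lt hvm,
    Nat.sInf_mem (s := {v | bit x (π v) ≠ bit y (π v)}) ⟨v, hv⟩⟩

end FirstBitDiff

lemma sum_range_mul_succ_of_eq_of_ne {y y' : ℕ → ℤ} {n w : ℕ} (hw : w < n)
    (hy : ∀ k ≤ n, k ≠ w → y' k = y k) :
    ∑ k ∈ range n, y' k * y' (k + 1) = ∑ k ∈ range n, y k * y (k + 1)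
      + (y' w - y w) * ((if w = 0 then 0 else y (w - 1)) + y (w + 1)) := by
  have hterm : ∀ k < n, y' k * y' (k + 1) - y k * y (k + 1)
      = (y' w - y w) * ((if k + 1 = w then y k else 0) + (if k = w then y (k + 1) else 0)) := by
    intro k hk
    by_cases hkw : k = w
    · subst hkw; rw [hy (k + 1) hk (by omega)]
      simp only [Nat.add_eq_left, one_ne_zero, ↓reduceIte, zero_add]; ring
    by_cases hkw' : k + 1 = w
    · subst hkw'; rw [hy k hk.le hkw]
      simp only [↓reduceIte, Nat.left_eq_add, one_ne_zero, add_zero]; ring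
    · rw [hy k hk.le hkw, hy (k + 1) hk hkw']; simp [hkw, hkw']
  rw [← sub_eq_iff_eq_add', ← sum_sub_distrib, sum_congr rfl fun k hk ↦ hterm k (mem_range.mp hk),
    ← mul_sum, sum_add_distrib, sum_ite_eq' (range n) w, if_pos (mem_range.mpr hw)]
  congr 2
  rcases w with _ | w
  · simp
  · simp [show w < n by omega]

lemma sum_mul_of_eq_of_ne {s : Finset ℕ} {c y y' : ℕ → ℤ} {p : ℕ} (hp : p ∈ s)
    (hy : ∀ k, k ≠ p → y' k = y k) :
    ∑ k ∈ s, c k * y' k = ∑ k ∈ s, c k * y k + c p * (y' p - y p) := by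
  rw [← sub_eq_iff_eq_add', ← sum_sub_distrib, sum_eq_single_of_mem p hp]
  · ring
  · intro k _ hk; rw [hy k hk, sub_self]

def pathGBF (h m : ℕ) (π cc : ℕ → ℕ) (c x : ℕ) : ℕ :=
  h * ∑ k ∈ range (m - 1), bit x (π k) * bit x (π (k + 1)) + ∑ k ∈ range m, cc k * bit x k + c

section PathGBF

variable {h m : ℕ} {π : ℕ → ℕ} {cc : ℕ → ℕ} {c : ℕ}

lemma intCast_pathGBF_xor_two_pow (hπ : Set.InjOn π (Set.Iio m)) {w : ℕ} (hw : w + 1 < m)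
    (hπw : π w < m) (x : ℕ) :
    (pathGBF h m π cc c (x ^^^ 2 ^ π w) : ℤ) = pathGBF h m π cc c x + (1 - 2 * bit x (π w)) *
      (h * ((if w = 0 then 0 else bit x (π (w - 1)) : ℤ) + bit x (π (w + 1))) + cc (π w)) := by
  have hquad := sum_range_mul_succ_of_eq_of_ne (n := m - 1) (w := w)
    (y := fun k ↦ (bit x (π k) : ℤ)) (y' := fun k ↦ (bit (x ^^^ 2 ^ π w) (π k) : ℤ)) (by omega)
    fun k hk hkw ↦ by
      simp only [Nat.cast_inj]
      refine bit_xor_two_pow_of_ne (fun he ↦ hkw (hπ ?_ ?_ he)) x <;>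
        exact Set.mem_Iio.mpr (by omega)
  have hlin := sum_mul_of_eq_of_ne (s := range m) (p := π w) (c := fun k ↦ (cc k : ℤ))
    (y := fun k ↦ (bit x k : ℤ)) (y' := fun k ↦ (bit (x ^^^ 2 ^ π w) k : ℤ)) (mem_range.mpr hπw)
    fun k hk ↦ by simp only [Nat.cast_inj]; exact bit_xor_two_pow_of_ne hk x
  simp only [intCast_bit_xor_two_pow_self] at hquad hlin
  simp only [pathGBF]
  push_cast
  rw [hquad, hlin]
  ring

lemma exists_odd_pathGBF_xor_two_pow_sub (hπ : Set.InjOn π (Set.Iio m)) {w : ℕ} (hw : w + 1 < m)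
    (hπw : π w < m) {x y : ℕ} (hprev : w ≠ 0 → bit x (π (w - 1)) = bit y (π (w - 1)))
    (hcur : bit x (π w) = bit y (π w)) (hnext : bit x (π (w + 1)) ≠ bit y (π (w + 1))) :
    ∃ s : ℤ, Odd s ∧ (pathGBF h m π cc c (x ^^^ 2 ^ π w) : ℤ) - pathGBF h m π cc c (y ^^^ 2 ^ π w)
      = (pathGBF h m π cc c x : ℤ) - pathGBF h m π cc c y + h * s := by
  refine ⟨(1 - 2 * bit x (π w)) * (bit x (π (w + 1)) - bit y (π (w + 1))), ?_, ?_⟩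
  · have := bit_lt_two x (π (w + 1))
    have := bit_lt_two y (π (w + 1))
    refine Int.odd_mul.mpr ⟨Int.odd_iff.mpr (by omega), Int.odd_iff.mpr (by omega)⟩
  · have hprev' : (if w = 0 then 0 else bit x (π (w - 1)) : ℤ)
        = (if w = 0 then 0 else bit y (π (w - 1)) : ℤ) := by
      split_ifs with hw0
      · rfl
      · rw [hprev hw0]
    rw [intCast_pathGBF_xor_two_pow hπ hw hπw, intCast_pathGBF_xor_two_pow hπ hw hπw, hprev', hcur]
    ring

end PathGBF

lemma zpow_add_natCast_mul_odd {z : ℂ} {h : ℕ} (hz : z ^ h = -1) (A : ℤ) {s : ℤ} (hs : Odd s) :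
    z ^ (A + h * s) = -z ^ A := by
  have hz0 : z ≠ 0 := by
    rintro rfl
    rcases eq_or_ne h 0 with rfl | h0 <;> norm_num [zero_pow, *] at hz
  rw [zpow_add₀ hz0, zpow_mul, zpow_natCast, hz, hs.neg_one_zpow, mul_neg_one]

noncomputable def golayPartner (π : ℕ → ℕ) (τ i : ℕ) : ℕ :=
  i ^^^ 2 ^ π (firstBitDiff π i (i + τ) - 1)

section Pairing

variable {h m τ : ℕ} {π : ℕ → ℕ} {cc : ℕ → ℕ} {c : ℕ}

lemma exists_golayPartner_eq_xor (hπ : Set.SurjOn π (Set.Iio m) (Set.Iio m)) (hτ : 0 < τ)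
    {i : ℕ} (hi : i + τ < 2 ^ m) (h0 : bit i (π 0) = bit (i + τ) (π 0)) :
    ∃ w, w + 1 < m ∧ firstBitDiff π i (i + τ) = w + 1 ∧
      bit i (π (w + 1)) ≠ bit (i + τ) (π (w + 1)) ∧
      golayPartner π τ i = i ^^^ 2 ^ π w ∧ (i ^^^ 2 ^ π w) + τ = (i + τ) ^^^ 2 ^ π w := by
  obtain ⟨hvm, hv⟩ := firstBitDiff_lt_and_bit_ne (x := i) (y := i + τ) hπ (by omega) hi (by omega)
  obtain ⟨w, hw⟩ : ∃ w, firstBitDiff π i (i + τ) = w + 1 :=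
    Nat.exists_eq_succ_of_ne_zero fun hv0 ↦ hv (by rw [hv0]; exact h0)
  rw [hw] at hvm hv
  exact ⟨w, hvm, hw, hv, by simp [golayPartner, hw],
    xor_two_pow_add_of_bit_eq (bit_eq_of_lt_firstBitDiff (by omega))⟩

lemma sum_zpow_pathGBF_sub_eq_zero {z : ℂ} (hz : z ^ h = -1)
    (hπ : Set.BijOn π (Set.Iio m) (Set.Iio m)) (hτ : 0 < τ) :
    ∑ i ∈ range (2 ^ m - τ) with bit i (π 0) = bit (i + τ) (π 0),
      z ^ ((pathGBF h m π cc c i : ℤ) - pathGBF h m π cc c (i + τ)) = 0 := by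
  refine sum_involution (fun i _ ↦ golayPartner π τ i) ?_ ?_ ?_ ?_ <;>
    intro i hi <;> rw [mem_filter, mem_range] at hi <;>
    obtain ⟨w, hwm, hv, hnext, hpart, hshift⟩ :=
      exists_golayPartner_eq_xor hπ.surjOn hτ (by omega) hi.2 <;>
    have hπw : π w < m := hπ.mapsTo (Set.mem_Iio.mpr (by omega))
  · obtain ⟨s, hs, hD⟩ := exists_odd_pathGBF_xor_two_pow_sub (h := h) (cc := cc) (c := c)
      hπ.injOn hwm hπw (fun _ ↦ bit_eq_of_lt_firstBitDiff (by omega))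
      (bit_eq_of_lt_firstBitDiff (by omega)) hnext
    rw [hpart, hshift, hD, zpow_add_natCast_mul_odd hz _ hs, add_neg_cancel]
  · exact fun _ ↦ hpart ▸ xor_two_pow_ne_self i (π w)
  · have hlt := Nat.xor_lt_two_pow (show i + τ < 2 ^ m by omega)
      (Nat.pow_lt_pow_right one_lt_two hπw)
    rw [mem_filter, mem_range, hpart, hshift, bit_xor_two_pow_eq_iff]
    exact ⟨by omega, hi.2⟩
  · simp only [golayPartner] at hpart ⊢
    rw [hpart, hshift, firstBitDiff_xor_two_pow, hv, Nat.add_sub_cancel, xor_cancel_right]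

end Pairing

lemma acorr_add_acorr_eq_sum {z : ℂ} (hz1 : ‖z‖ = 1) {h : ℕ} (hz : z ^ h = -1)
    (N τ : ℕ) (f β : ℕ → ℕ) (c' : ℕ) :
    acorr N (fun i ↦ z ^ f i) (fun i ↦ z ^ f i) τ
      + acorr N (fun i ↦ z ^ (f i + h * β i + c')) (fun i ↦ z ^ (f i + h * β i + c')) τ
      = ∑ i ∈ range (N - τ), z ^ ((f i : ℤ) - f (i + τ)) * (1 + (-1) ^ (β i + β (i + τ))) := by
  have hz0 : z ≠ 0 := norm_ne_zero_iff.mp (by rw [hz1]; exact one_ne_zero)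
  simp only [acorr, ← sum_add_distrib, map_pow, ← inv_eq_conj hz1]
  refine sum_congr rfl fun i _ ↦ ?_
  simp only [pow_add, pow_mul, inv_pow, hz, inv_neg, inv_one, zpow_sub₀ hz0, zpow_natCast]
  rw [div_eq_mul_inv]
  linear_combination (z ^ f i * (z ^ f (i + τ))⁻¹ * (-1) ^ β i * (-1) ^ β (i + τ)) *
    mul_inv_cancel₀ (pow_ne_zero c' hz0)

lemma sum_zpow_pathGBF_sub_mul_eq_zero {z : ℂ} {h m τ : ℕ} {π cc : ℕ → ℕ} {c : ℕ}
    (hz : z ^ h = -1) (hπ : Set.BijOn π (Set.Iio m) (Set.Iio m)) (hτ : 0 < τ) :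
    ∑ i ∈ range (2 ^ m - τ), z ^ ((pathGBF h m π cc c i : ℤ) - pathGBF h m π cc c (i + τ))
      * (1 + (-1) ^ (bit i (π 0) + bit (i + τ) (π 0))) = 0 := by
  rw [← sum_filter_of_ne (p := fun i ↦ bit i (π 0) = bit (i + τ) (π 0))]
  · have htwo : ∀ i, bit i (π 0) = bit (i + τ) (π 0) →
        1 + (-1 : ℂ) ^ (bit i (π 0) + bit (i + τ) (π 0)) = 2 := fun i hi ↦ by
      rw [hi, ← two_mul, pow_mul]; norm_num
    rw [sum_congr rfl fun i hi ↦ by rw [htwo i (mem_filter.mp hi).2], ← sum_mul,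
      sum_zpow_pathGBF_sub_eq_zero hz hπ hτ, zero_mul]
  · intro i _ hne
    contrapose! hne
    have := bit_lt_two i (π 0)
    have := bit_lt_two (i + τ) (π 0)
    rw [show bit i (π 0) + bit (i + τ) (π 0) = 1 by omega]
    ring

lemma isPrimitiveRoot_omegaq {q : ℕ} (hq : q ≠ 0) : IsPrimitiveRoot (omegaq q) q :=
  Complex.isPrimitiveRoot_exp q hq

lemma omegaq_pow_half {q : ℕ} (hq : q ≠ 0) (hq2 : 2 ∣ q) : omegaq q ^ (q / 2) = -1 := by
  have := (isPrimitiveRoot_omegaq hq).pow_of_dvd (by omega) (Nat.div_dvd_of_dvd hq2)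
  rw [Nat.div_div_self hq2 hq] at this
  exact this.eq_neg_one_of_two_right

theorem stmt_1_general (q m : ℕ) (hq : 2 ≤ q) (hq2 : 2 ∣ q)
    (π : ℕ → ℕ) (hπ : Set.BijOn π (Set.Iio m) (Set.Iio m))
    (c c' : ℕ) (cc : ℕ → ℕ)
    (g : ℕ → ℕ)
    (hg : ∀ i, g i = q / 2 * ∑ k ∈ Finset.range (m - 1), bit i (π k) * bit i (π (k + 1))
        + ∑ k ∈ Finset.range m, cc k * bit i k + c)
    (a b : ℕ → ℂ)
    (ha : ∀ i, a i = omegaq q ^ g i)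
    (hb : ∀ i, b i = omegaq q ^ (g i + q / 2 * bit i (π 0) + c')) :
    ∀ τ : ℕ, 0 < τ → acorr (2 ^ m) a a τ + acorr (2 ^ m) b b τ = 0 := by
  intro τ hτ
  have hq0 : q ≠ 0 := by omega
  obtain rfl : g = pathGBF (q / 2) m π cc c := funext hg
  obtain rfl : a = _ := funext ha
  obtain rfl : b = _ := funext hb
  rw [acorr_add_acorr_eq_sum ((isPrimitiveRoot_omegaq hq0).norm'_eq_one hq0)
    (omegaq_pow_half hq0 hq2)]
  exact sum_zpow_pathGBF_sub_mul_eq_zero (omegaq_pow_half hq0 hq2) hπ hτ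

/-- the standard GBF quadratic form gives a Golay complementary pair. -/
theorem stmt_1 (q m : ℕ) (hq : 2 ≤ q) (hq2 : 2 ∣ q) (hm : 2 ≤ m)
    (π : ℕ → ℕ) (hπ : Set.BijOn π (Set.Iio m) (Set.Iio m))
    (c c' : ℕ) (cc : ℕ → ℕ)
    (g : ℕ → ℕ)
    (hg : ∀ i, g i = q / 2 * ∑ k ∈ Finset.range (m - 1), bit i (π k) * bit i (π (k + 1))
        + ∑ k ∈ Finset.range m, cc k * bit i k + c)
    (a b : ℕ → ℂ)
    (ha : ∀ i, a i = omegaq q ^ g i)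
    (hb : ∀ i, b i = omegaq q ^ (g i + q / 2 * bit i (π 0) + c')) :
    ∀ τ : ℕ, 0 < τ → acorr (2 ^ m) a a τ + acorr (2 ^ m) b b τ = 0 :=
  stmt_1_general q m hq hq2 π hπ c c' cc g hg a b ha hb
end

section
/- With g as in the Golay construction, the pair (Ψ(g+(q/2)x_{π(m−1)}), Ψ(g+(q/2)(x_{π(0)}+x_{π(m−1)})+c')) is a complementary mate of the GCP (Ψ(g), Ψ(g+(q/2)x_{π(0)}+c')), i.e., the sum of the two aperiodic cross-correlations C(Ψ(g),Ψ(g+(q/2)x_{π(m−1)}))(τ) + C(Ψ(g+(q/2)x_{π(0)}+c'),Ψ(g+(q/2)(x_{π(0)}+x_{π(m−1)})+c'))(τ) vanishes for every shift τ. -/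
/-!
Write `x_k(i)` for the bits of `i`, `j = i + τ`, and `ω` for `omegaq q`. Since
`ω ^ (q / 2) = -1`, both correlation sums reduce to
`∑ ω^(g i - g j) (1 + (-1)^(x_{π 0}(i) + x_{π 0}(j))) ε(i, j)` with the sign
`ε = (-1)^(x_{π (m-1)})` taken at `j` or at `i`. Terms with `x_{π 0}(i) ≠ x_{π 0}(j)` vanish.
Otherwise let `v` be the first position along the path `π` where `i` and `j` differ and flip
bit `π (v - 1)` in both: this keeps `j - i = τ` and `v`, and by the path structure of `g` it
changes `g i - g j` by an odd multiple of `q / 2`, negating the term, while `ε` is unchanged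
since `v - 1 < m - 1`. If there is no such `v`, then `τ = 0` and flipping bit `π (m - 1)`
negates `ε` only. So the terms cancel in pairs.
-/

open Finset Complex

namespace GolayMate

lemma bit_eq_toNat_testBit (i k : ℕ) : bit i k = (i.testBit k).toNat :=
  (Nat.toNat_testBit i k).symm

lemma bit_lt_two (i k : ℕ) : bit i k < 2 := Nat.mod_lt _ two_pos

lemma eq_of_bit_eq {m i j : ℕ} (hi : i < 2 ^ m) (hj : j < 2 ^ m)
    (h : ∀ k < m, bit i k = bit j k) : i = j := by
  refine Nat.eq_of_testBit_eq fun k => ?_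
  rcases lt_or_ge k m with hk | hk
  · have hb := h k hk
    unfold bit at hb
    simp only [Nat.testBit_eq_decide_div_mod_eq, hb]
  · rw [Nat.testBit_lt_two_pow (hi.trans_le (Nat.pow_le_pow_right two_pos hk)),
      Nat.testBit_lt_two_pow (hj.trans_le (Nat.pow_le_pow_right two_pos hk))]

def flipBit (i k : ℕ) : ℕ := i ^^^ 2 ^ k

lemma bit_flipBit (i k r : ℕ) : bit (flipBit i k) r = if r = k then 1 - bit i r else bit i r := by
  rcases eq_or_ne r k with rfl | hr
  · cases h : i.testBit r <;> simp [bit_eq_toNat_testBit, flipBit, Nat.testBit_xor, h]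
  · simp [bit_eq_toNat_testBit, flipBit, Nat.testBit_xor, hr, Ne.symm hr]

lemma bit_flipBit_of_ne {r k : ℕ} (i : ℕ) (h : r ≠ k) : bit (flipBit i k) r = bit i r := by
  rw [bit_flipBit, if_neg h]

lemma bit_flipBit_eq_iff (i j k r : ℕ) :
    bit (flipBit i k) r = bit (flipBit j k) r ↔ bit i r = bit j r := by
  have := bit_lt_two i r; have := bit_lt_two j r
  rw [bit_flipBit, bit_flipBit]; split_ifs <;> omega

lemma flipBit_flipBit (i k : ℕ) : flipBit (flipBit i k) k = i := Nat.xor_xor_cancel_right i _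

lemma flipBit_lt_two_pow {i k m : ℕ} (hi : i < 2 ^ m) (hk : k < m) : flipBit i k < 2 ^ m :=
  Nat.xor_lt_two_pow hi (Nat.pow_lt_pow_right one_lt_two hk)

lemma cast_flipBit (i k : ℕ) : (flipBit i k : ℤ) = i + (1 - 2 * bit i k) * 2 ^ k := by
  have hsplit : flipBit i k = 2 ^ k * (i / 2 ^ k ^^^ 1) + i % 2 ^ k := by
    conv_lhs => rw [← Nat.div_add_mod (flipBit i k) (2 ^ k)]
    rw [flipBit, Nat.xor_div_two_pow, Nat.xor_mod_two_pow, Nat.div_self (by positivity),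
      Nat.mod_self, Nat.xor_zero]
  have hbit : bit i k = i / 2 ^ k % 2 := rfl
  rw [hsplit, hbit]
  have hi := Nat.div_add_mod i (2 ^ k)
  generalize i / 2 ^ k = d, i % 2 ^ k = r at hi ⊢
  subst hi
  rcases Nat.even_or_odd d with he | ho
  · rw [Nat.xor_one_of_even he, Nat.even_iff.mp he]
    push_cast; ring
  · rw [Nat.xor_one_of_odd ho, Nat.odd_iff.mp ho]
    push_cast [ho.pos]; ring

lemma flipBit_add {i k τ : ℕ} (h : bit i k = bit (i + τ) k) :
    flipBit i k + τ = flipBit (i + τ) k := by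
  have h1 := cast_flipBit i k
  have h2 := cast_flipBit (i + τ) k
  rw [← h] at h2
  push_cast at h2
  omega

lemma cast_bit_flipBit (i k r : ℕ) :
    (bit (flipBit i k) r : ℤ) = bit i r + if r = k then 1 - 2 * (bit i k : ℤ) else 0 := by
  have := bit_lt_two i r
  rw [bit_flipBit]
  split_ifs with h
  · subst h; omega
  · simp

def firstDiff (π : ℕ → ℕ) (m i j : ℕ) : ℕ :=
  Nat.find (⟨m, .inl rfl⟩ : ∃ u, u = m ∨ bit i (π u) ≠ bit j (π u))

section firstDiff

variable {π : ℕ → ℕ} {m i j : ℕ}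

lemma firstDiff_le : firstDiff π m i j ≤ m := Nat.find_min' _ (.inl rfl)

lemma bit_eq_of_lt_firstDiff {u : ℕ} (hu : u < firstDiff π m i j) :
    bit i (π u) = bit j (π u) := by
  simpa using (not_or.mp (Nat.find_min _ hu)).2

lemma bit_ne_of_firstDiff_lt (h : firstDiff π m i j < m) :
    bit i (π (firstDiff π m i j)) ≠ bit j (π (firstDiff π m i j)) :=
  (Nat.find_spec (⟨m, .inl rfl⟩ : ∃ u, u = m ∨ bit i (π u) ≠ bit j (π u))).resolve_left
    h.ne

lemma firstDiff_flipBit (k : ℕ) :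
    firstDiff π m (flipBit i k) (flipBit j k) = firstDiff π m i j :=
  Nat.find_congr' fun {_} => by rw [ne_eq, ne_eq, bit_flipBit_eq_iff]

lemma eq_of_firstDiff_eq (hπ : Set.SurjOn π (Set.Iio m) (Set.Iio m)) (hi : i < 2 ^ m)
    (hj : j < 2 ^ m) (h : firstDiff π m i j = m) : i = j := by
  refine eq_of_bit_eq hi hj fun k hk => ?_
  obtain ⟨u, hu, rfl⟩ := hπ hk
  exact bit_eq_of_lt_firstDiff (h ▸ hu)

end firstDiff

def flipPartner (π : ℕ → ℕ) (m τ i : ℕ) : ℕ :=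
  if firstDiff π m i (i + τ) = 0 then i else flipBit i (π (firstDiff π m i (i + τ) - 1))

section flipPartner

variable {π : ℕ → ℕ} {m τ i : ℕ}

lemma flipPartner_of_pos (h : 0 < firstDiff π m i (i + τ)) :
    flipPartner π m τ i = flipBit i (π (firstDiff π m i (i + τ) - 1)) := by
  rw [flipPartner, if_neg h.ne']

lemma flipPartner_add (h : 0 < firstDiff π m i (i + τ)) :
    flipPartner π m τ i + τ = flipBit (i + τ) (π (firstDiff π m i (i + τ) - 1)) := by
  rw [flipPartner_of_pos h]
  exact flipBit_add (bit_eq_of_lt_firstDiff (Nat.sub_one_lt h.ne'))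

lemma firstDiff_flipPartner (h : 0 < firstDiff π m i (i + τ)) :
    firstDiff π m (flipPartner π m τ i) (flipPartner π m τ i + τ) =
      firstDiff π m i (i + τ) := by
  rw [flipPartner_add h, flipPartner_of_pos h, firstDiff_flipBit]

lemma flipPartner_flipPartner : flipPartner π m τ (flipPartner π m τ i) = i := by
  rcases Nat.eq_zero_or_pos (firstDiff π m i (i + τ)) with h | h
  · simp only [flipPartner, h, if_true]
  · rw [flipPartner_of_pos (firstDiff_flipPartner h ▸ h), firstDiff_flipPartner h,
      flipPartner_of_pos h, flipBit_flipBit]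

lemma flipPartner_add_lt (hπ : Set.MapsTo π (Set.Iio m) (Set.Iio m)) (hi : i + τ < 2 ^ m) :
    flipPartner π m τ i + τ < 2 ^ m := by
  rcases Nat.eq_zero_or_pos (firstDiff π m i (i + τ)) with h | h
  · simpa only [flipPartner, h, if_true] using hi
  · rw [flipPartner_add h]
    have := firstDiff_le (π := π) (m := m) (i := i) (j := i + τ)
    exact flipBit_lt_two_pow hi (hπ (Set.mem_Iio.mpr (by omega)))

end flipPartner

theorem sum_range_eq_zero_of_flipBit_neg {M : Type*} [AddCommGroup M] [IsAddTorsionFree M]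
    {π : ℕ → ℕ} {m : ℕ} (hm : 0 < m) (hπ : Set.BijOn π (Set.Iio m) (Set.Iio m))
    (F : ℕ → ℕ → M) (hF_zero : ∀ i j, bit i (π 0) ≠ bit j (π 0) → F i j = 0)
    (hF_flip : ∀ i j, 0 < firstDiff π m i j → firstDiff π m i j < m →
      F (flipBit i (π (firstDiff π m i j - 1))) (flipBit j (π (firstDiff π m i j - 1))) =
        -F i j)
    (hF_diag : ∀ i, F (flipBit i (π (m - 1))) (flipBit i (π (m - 1))) = -F i i) (τ : ℕ) :
    ∑ i ∈ range (2 ^ m - τ), F i (i + τ) = 0 := by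
  have hmem : ∀ i ∈ range (2 ^ m - τ), flipPartner π m τ i ∈ range (2 ^ m - τ) := by
    intro i hi
    have := flipPartner_add_lt hπ.mapsTo (i := i) (τ := τ) (by rw [mem_range] at hi; omega)
    rw [mem_range]; omega
  have hneg : ∀ i ∈ range (2 ^ m - τ),
      F i (i + τ) = -F (flipPartner π m τ i) (flipPartner π m τ i + τ) := by
    intro i hi
    rw [mem_range] at hi
    rcases Nat.eq_zero_or_pos (firstDiff π m i (i + τ)) with h0 | hpos
    · have hF : F i (i + τ) = 0 := hF_zero _ _ (h0 ▸ bit_ne_of_firstDiff_lt (h0 ▸ hm))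
      simp only [flipPartner, h0, if_true, hF, neg_zero]
    rcases firstDiff_le.lt_or_eq with hlt | heq
    · rw [flipPartner_add hpos, flipPartner_of_pos hpos, hF_flip _ _ hpos hlt, neg_neg]
    · have hτ : τ = 0 := by
        have := eq_of_firstDiff_eq hπ.surjOn (by omega) (by omega) heq
        omega
      subst hτ
      simp only [add_zero] at heq ⊢
      rw [flipPartner_of_pos (by simpa using hpos), add_zero, heq, hF_diag, neg_neg]
  refine self_eq_neg.mp ?_
  rw [← sum_neg_distrib]
  exact sum_nbij' _ _ hmem hmem (fun i _ => flipPartner_flipPartner)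
    (fun i _ => flipPartner_flipPartner) hneg

lemma omegaq_ne_zero (q : ℕ) : omegaq q ≠ 0 := Complex.exp_ne_zero _

lemma omegaq_pow_half {q : ℕ} (hq : 0 < q) (hq2 : 2 ∣ q) : omegaq q ^ (q / 2) = -1 := by
  obtain ⟨t, rfl⟩ := hq2
  have ht : (t : ℂ) ≠ 0 := Nat.cast_ne_zero.mpr (by omega)
  rw [Nat.mul_div_cancel_left t two_pos, omegaq, ← Complex.exp_nat_mul,
    show (t : ℂ) * (2 * Real.pi * I / ((2 * t : ℕ) : ℂ)) = Real.pi * I by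
      push_cast; field_simp]
  exact Complex.exp_pi_mul_I

lemma conj_omegaq (q : ℕ) : (starRingEnd ℂ) (omegaq q) = (omegaq q)⁻¹ := by
  rw [omegaq, ← Complex.exp_conj, ← Complex.exp_neg]
  congr 1
  simp only [map_div₀, map_mul, Complex.conj_I, Complex.conj_ofNat, Complex.conj_natCast,
    Complex.conj_ofReal]
  ring

lemma omegaq_pow_mul_conj_pow (q a b : ℕ) :
    omegaq q ^ a * (starRingEnd ℂ) (omegaq q ^ b) = omegaq q ^ ((a : ℤ) - b) := by
  rw [map_pow, conj_omegaq, inv_pow, zpow_sub₀ (omegaq_ne_zero q), zpow_natCast, zpow_natCast,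
    div_eq_mul_inv]

lemma omegaq_pow_mul_conj_pow_self (q a : ℕ) :
    omegaq q ^ a * (starRingEnd ℂ) (omegaq q ^ a) = 1 := by
  rw [omegaq_pow_mul_conj_pow, sub_self, zpow_zero]

section golay

variable {q m c : ℕ} {π cc g : ℕ → ℕ} {i j v : ℕ}

lemma linear_flipBit_sub (cc : ℕ → ℕ) (n k : ℕ) (hk : bit i k = bit j k) :
    (∑ r ∈ range n, (cc r : ℤ) * bit (flipBit i k) r) -
        ∑ r ∈ range n, (cc r : ℤ) * bit i r =
      (∑ r ∈ range n, (cc r : ℤ) * bit (flipBit j k) r) -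
        ∑ r ∈ range n, (cc r : ℤ) * bit j r := by
  simp only [← sum_sub_distrib, cast_bit_flipBit, hk, mul_add, add_sub_cancel_left]

def pathForm (π : ℕ → ℕ) (m n : ℕ) : ℤ :=
  ∑ u ∈ range (m - 1), (bit n (π u) : ℤ) * bit n (π (u + 1))

/-- Every edge of the path other than `(π (v - 1), π v)` sees equal bits in `i` and `j`, so its
contributions to the two differences cancel. -/
lemma pathForm_flipBit_sub (hπ : Set.InjOn π (Set.Iio m)) (hv0 : 0 < v) (hvm : v < m)
    (hagree : ∀ u < v, bit i (π u) = bit j (π u)) :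
    (pathForm π m (flipBit i (π (v - 1))) - pathForm π m i) -
        (pathForm π m (flipBit j (π (v - 1))) - pathForm π m j) =
      (1 - 2 * (bit i (π (v - 1)) : ℤ)) * (bit i (π v) - bit j (π v)) := by
  set k := π (v - 1) with hkv
  set e : ℕ → ℤ := fun r => if r = k then 1 - 2 * (bit i k : ℤ) else 0 with he
  have hk : bit j k = bit i k := (hagree (v - 1) (by omega)).symm
  have hinj : ∀ u, u < m → π u = k → u = v - 1 := fun u hu h =>
    hπ (Set.mem_Iio.mpr hu) (Set.mem_Iio.mpr (by omega)) h
  have hsplit : (pathForm π m (flipBit i k) - pathForm π m i) -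
      (pathForm π m (flipBit j k) - pathForm π m j) =
      ∑ u ∈ range (m - 1), e (π u) * (bit i (π (u + 1)) - bit j (π (u + 1))) +
        ∑ u ∈ range (m - 1), e (π (u + 1)) * (bit i (π u) - bit j (π u)) := by
    simp only [pathForm, cast_bit_flipBit, hk, ← sum_sub_distrib, ← sum_add_distrib]
    refine sum_congr rfl fun u _ => ?_
    simp only [he]
    ring
  have hfirst : ∑ u ∈ range (m - 1), e (π u) * (bit i (π (u + 1)) - bit j (π (u + 1))) =
      (1 - 2 * (bit i k : ℤ)) * (bit i (π v) - bit j (π v)) := by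
    rw [sum_eq_single_of_mem (v - 1) (mem_range.mpr (by omega))]
    · simp only [he, ← hkv, if_true, Nat.sub_add_cancel hv0]
    · intro u hu hne
      rw [mem_range] at hu
      simp only [he, if_neg fun h => hne (hinj u (by omega) h), zero_mul]
  have hsecond : ∑ u ∈ range (m - 1), e (π (u + 1)) * (bit i (π u) - bit j (π u)) = 0 := by
    refine sum_eq_zero fun u hu => ?_
    rw [mem_range] at hu
    by_cases h : π (u + 1) = k
    · rw [hagree u (by have := hinj (u + 1) (by omega) h; omega), sub_self, mul_zero]
    · simp only [he, if_neg h, zero_mul]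
  rw [hsplit, hfirst, hsecond, add_zero]

lemma cast_golay
    (hg : ∀ i, g i = q / 2 * ∑ k ∈ range (m - 1), bit i (π k) * bit i (π (k + 1))
        + ∑ k ∈ range m, cc k * bit i k + c) (n : ℕ) :
    (g n : ℤ) =
      (q / 2 : ℕ) * pathForm π m n + ∑ k ∈ range m, (cc k : ℤ) * bit n k + c := by
  rw [hg n, pathForm]
  push_cast
  ring

lemma golay_flipBit_sub
    (hg : ∀ i, g i = q / 2 * ∑ k ∈ range (m - 1), bit i (π k) * bit i (π (k + 1))
        + ∑ k ∈ range m, cc k * bit i k + c)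
    (hπ : Set.InjOn π (Set.Iio m)) (hv0 : 0 < v) (hvm : v < m)
    (hagree : ∀ u < v, bit i (π u) = bit j (π u)) :
    ((g (flipBit i (π (v - 1))) : ℤ) - g (flipBit j (π (v - 1)))) - ((g i : ℤ) - g j) =
      (q / 2 : ℕ) * ((1 - 2 * (bit i (π (v - 1)) : ℤ)) * (bit i (π v) - bit j (π v))) := by
  simp only [cast_golay hg]
  linear_combination ((q / 2 : ℕ) : ℤ) * pathForm_flipBit_sub hπ hv0 hvm hagree +
    linear_flipBit_sub cc m (π (v - 1)) (hagree (v - 1) (by omega))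

lemma golay_phase_flipBit (hq : 0 < q) (hq2 : 2 ∣ q)
    (hg : ∀ i, g i = q / 2 * ∑ k ∈ range (m - 1), bit i (π k) * bit i (π (k + 1))
        + ∑ k ∈ range m, cc k * bit i k + c)
    (hπ : Set.InjOn π (Set.Iio m)) (hv0 : 0 < v) (hvm : v < m)
    (hagree : ∀ u < v, bit i (π u) = bit j (π u)) (hdiff : bit i (π v) ≠ bit j (π v)) :
    omegaq q ^ g (flipBit i (π (v - 1))) *
        (starRingEnd ℂ) (omegaq q ^ g (flipBit j (π (v - 1)))) =
      -(omegaq q ^ g i * (starRingEnd ℂ) (omegaq q ^ g j)) := by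
  set t : ℤ := (1 - 2 * (bit i (π (v - 1)) : ℤ)) * (bit i (π v) - bit j (π v))
  have ht : Odd t := by
    refine Odd.mul ⟨-(bit i (π (v - 1)) : ℤ), by ring⟩ (Int.odd_iff.mpr ?_)
    have := bit_lt_two i (π v); have := bit_lt_two j (π v)
    omega
  rw [omegaq_pow_mul_conj_pow, omegaq_pow_mul_conj_pow,
    eq_add_of_sub_eq' (golay_flipBit_sub hg hπ hv0 hvm hagree), zpow_add₀ (omegaq_ne_zero q),
    zpow_mul, zpow_natCast, omegaq_pow_half hq hq2, ht.neg_one_zpow, mul_neg_one]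

end golay

lemma neg_one_pow_bit_flipBit (i k r : ℕ) :
    (-1 : ℂ) ^ bit (flipBit i k) r = (if r = k then -1 else 1) * (-1) ^ bit i r := by
  rw [bit_flipBit]
  split_ifs with h
  · have := bit_lt_two i r
    interval_cases bit i r <;> simp
  · rw [one_mul]

lemma neg_one_pow_bit_flipBit_mul (i j k r : ℕ) :
    (-1 : ℂ) ^ bit (flipBit i k) r * (-1) ^ bit (flipBit j k) r =
      (-1) ^ bit i r * (-1) ^ bit j r := by
  rw [neg_one_pow_bit_flipBit, neg_one_pow_bit_flipBit]
  split_ifs <;> ring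

lemma one_add_neg_one_pow_mul_neg_one_pow_of_ne {a b : ℕ} (ha : a < 2) (hb : b < 2)
    (h : a ≠ b) : 1 + (-1 : ℂ) ^ a * (-1) ^ b = 0 := by
  rw [← pow_add, show a + b = 1 by omega, pow_one, add_neg_cancel]

theorem sum_golay_mul_eq_zero {q m c : ℕ} {π cc g : ℕ → ℕ} (hq : 0 < q) (hq2 : 2 ∣ q)
    (hm : 0 < m) (hπ : Set.BijOn π (Set.Iio m) (Set.Iio m))
    (hg : ∀ i, g i = q / 2 * ∑ k ∈ range (m - 1), bit i (π k) * bit i (π (k + 1))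
        + ∑ k ∈ range m, cc k * bit i k + c)
    (s : ℕ → ℕ → ℂ)
    (hs : ∀ i j k, k ≠ π (m - 1) → s (flipBit i k) (flipBit j k) = s i j)
    (hs_diag : ∀ i, s (flipBit i (π (m - 1))) (flipBit i (π (m - 1))) = -s i i) (τ : ℕ) :
    ∑ i ∈ range (2 ^ m - τ), omegaq q ^ g i * (starRingEnd ℂ) (omegaq q ^ g (i + τ)) *
      (1 + (-1) ^ bit i (π 0) * (-1) ^ bit (i + τ) (π 0)) * s i (i + τ) = 0 := by
  refine sum_range_eq_zero_of_flipBit_neg hm hπ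
    (fun i j => omegaq q ^ g i * (starRingEnd ℂ) (omegaq q ^ g j) *
      (1 + (-1) ^ bit i (π 0) * (-1) ^ bit j (π 0)) * s i j) ?_ ?_ ?_ τ
  · intro i j h
    simp only [one_add_neg_one_pow_mul_neg_one_pow_of_ne (bit_lt_two _ _) (bit_lt_two _ _) h,
      mul_zero, zero_mul]
  · intro i j h0 hlt
    have hk : π (firstDiff π m i j - 1) ≠ π (m - 1) := fun h => by
      have := hπ.injOn (Set.mem_Iio.mpr (by omega)) (Set.mem_Iio.mpr (by omega)) h
      omega
    rw [golay_phase_flipBit hq hq2 hg hπ.injOn h0 hlt (fun u => bit_eq_of_lt_firstDiff)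
      (bit_ne_of_firstDiff_lt hlt), neg_one_pow_bit_flipBit_mul, hs _ _ _ hk]
    ring
  · intro i
    rw [omegaq_pow_mul_conj_pow_self, omegaq_pow_mul_conj_pow_self, neg_one_pow_bit_flipBit_mul,
      hs_diag]
    ring

lemma acorr_summand_left {q : ℕ} (hq : 0 < q) (hq2 : 2 ∣ q) (A B x y y' c' : ℕ) :
    omegaq q ^ A * (starRingEnd ℂ) (omegaq q ^ (B + q / 2 * x)) +
        omegaq q ^ (A + q / 2 * y + c') *
          (starRingEnd ℂ) (omegaq q ^ (B + q / 2 * (y' + x) + c')) =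
      omegaq q ^ A * (starRingEnd ℂ) (omegaq q ^ B) * (1 + (-1) ^ y * (-1) ^ y') * (-1) ^ x := by
  have hc := omegaq_pow_mul_conj_pow_self q c'
  simp only [pow_add (omegaq q), pow_mul, omegaq_pow_half hq hq2, map_mul, map_pow, map_neg,
    map_one, pow_add (-1 : ℂ)] at hc ⊢
  linear_combination (omegaq q ^ A * (starRingEnd ℂ) (omegaq q) ^ B * (-1) ^ y * (-1) ^ y' *
    (-1) ^ x) * hc

lemma acorr_summand_right {q : ℕ} (hq : 0 < q) (hq2 : 2 ∣ q) (A B x y y' c' : ℕ) :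
    omegaq q ^ (A + q / 2 * x) * (starRingEnd ℂ) (omegaq q ^ B) +
        omegaq q ^ (A + q / 2 * (y + x) + c') *
          (starRingEnd ℂ) (omegaq q ^ (B + q / 2 * y' + c')) =
      omegaq q ^ A * (starRingEnd ℂ) (omegaq q ^ B) * (1 + (-1) ^ y * (-1) ^ y') * (-1) ^ x := by
  have hc := omegaq_pow_mul_conj_pow_self q c'
  simp only [pow_add (omegaq q), pow_mul, omegaq_pow_half hq hq2, map_mul, map_pow, map_neg,
    map_one, pow_add (-1 : ℂ)] at hc ⊢
  linear_combination (omegaq q ^ A * (starRingEnd ℂ) (omegaq q) ^ B * (-1) ^ y * (-1) ^ y' *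
    (-1) ^ x) * hc

end GolayMate

open GolayMate

/-- the pair (Ψ(g+(q/2)x_{π(m−1)}), Ψ(g+(q/2)(x_{π(0)}+x_{π(m−1)})+c')) is a
complementary mate of the GCP (Ψ(g), Ψ(g+(q/2)x_{π(0)}+c')): the sum of cross-correlations
vanishes at every shift. -/
theorem stmt_2 (q m : ℕ) (hq : 2 ≤ q) (hq2 : 2 ∣ q) (hm : 2 ≤ m)
    (π : ℕ → ℕ) (hπ : Set.BijOn π (Set.Iio m) (Set.Iio m))
    (c c' : ℕ) (cc : ℕ → ℕ)
    (g : ℕ → ℕ)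
    (hg : ∀ i, g i = q / 2 * ∑ k ∈ Finset.range (m - 1), bit i (π k) * bit i (π (k + 1))
        + ∑ k ∈ Finset.range m, cc k * bit i k + c)
    (a b cs ds : ℕ → ℂ)
    (ha : ∀ i, a i = omegaq q ^ g i)
    (hb : ∀ i, b i = omegaq q ^ (g i + q / 2 * bit i (π 0) + c'))
    (hcs : ∀ i, cs i = omegaq q ^ (g i + q / 2 * bit i (π (m - 1))))
    (hds : ∀ i, ds i = omegaq q ^ (g i + q / 2 * (bit i (π 0) + bit i (π (m - 1))) + c')) :
    ∀ τ : ℕ,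
      acorr (2 ^ m) a cs τ + acorr (2 ^ m) b ds τ = 0 ∧
      acorr (2 ^ m) cs a τ + acorr (2 ^ m) ds b τ = 0 := by
  intro τ
  have hq0 : 0 < q := by omega
  have hsign : ∀ i k, k ≠ π (m - 1) →
      (-1 : ℂ) ^ bit (flipBit i k) (π (m - 1)) = (-1) ^ bit i (π (m - 1)) :=
    fun i k hk => by rw [bit_flipBit_of_ne _ hk.symm]
  have hsign_diag : ∀ i, (-1 : ℂ) ^ bit (flipBit i (π (m - 1))) (π (m - 1)) =
      -(-1) ^ bit i (π (m - 1)) :=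
    fun i => by rw [neg_one_pow_bit_flipBit, if_pos rfl, neg_one_mul]
  constructor
  · rw [acorr, acorr, ← sum_add_distrib]
    refine (sum_congr rfl fun i _ => ?_).trans (sum_golay_mul_eq_zero hq0 hq2 (by omega) hπ hg
      (fun _ j => (-1) ^ bit j (π (m - 1))) (fun _ j k hk => hsign j k hk) (hsign_diag ·) τ)
    rw [ha, hcs, hb, hds, acorr_summand_left hq0 hq2]
  · rw [acorr, acorr, ← sum_add_distrib]
    refine (sum_congr rfl fun i _ => ?_).trans (sum_golay_mul_eq_zero hq0 hq2 (by omega) hπ hg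
      (fun i _ => (-1) ^ bit i (π (m - 1))) (fun i _ k hk => hsign i k hk) (hsign_diag ·) τ)
    rw [hcs, ha, hds, hb, acorr_summand_right hq0 hq2]
end

section
/- If i and j=i+τ are integers in [0, 2^{m−2}−1] with 2^{m−2}−2^{k} ≤ τ ≤ 2^{m−2}−1 for some 0≤k≤m−3, then the k-th binary digits of i and j differ. -/
open Finset Complex

/-!
Since `j = i + τ < 2^{m-2}` and `τ ≥ 2^{m-2} - 2^k`, we get `i < 2^k`, so the `k`-th digit of `i`
is `0`. On the other hand `2^{m-2} - 2^k ≤ j < 2^{m-2}` forces `j / 2^k = 2^{m-2-k} - 1`, which is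
odd, so the `k`-th digit of `j` is `1`.
-/

lemma bit_eq_zero_of_lt {i k : ℕ} (h : i < 2 ^ k) : bit i k = 0 := by
  rw [bit, Nat.div_eq_of_lt h]

lemma bit_eq_one_of_two_pow_sub_le_of_lt {j k M : ℕ} (hkM : k < M) (hlo : 2 ^ M - 2 ^ k ≤ j)
    (hhi : j < 2 ^ M) : bit j k = 1 := by
  obtain ⟨d, rfl⟩ : ∃ d, M = k + (d + 1) := ⟨M - k - 1, by omega⟩
  have hsplit : 2 ^ (k + (d + 1)) = 2 * 2 ^ d * 2 ^ k := by ring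
  have hd : 0 < 2 ^ d := by positivity
  have hquot : j / 2 ^ k = 2 * 2 ^ d - 1 :=
    Nat.div_eq_of_lt_le (by rw [Nat.sub_mul]; omega)
      (by rw [Nat.sub_add_cancel (by omega)]; omega)
  rw [bit, hquot]
  omega

theorem stmt_4_general (m k i j τ : ℕ) (hm : 4 ≤ m) (hk : k ≤ m - 3)
    (hij : j = i + τ) (hj : j ≤ 2 ^ (m - 2) - 1)
    (hτ1 : 2 ^ (m - 2) - 2 ^ k ≤ τ) :
    bit i k ≠ bit j k := by
  have hkM : k < m - 2 := by omega
  have hpow : 2 ^ k < 2 ^ (m - 2) := Nat.pow_lt_pow_right (by norm_num) hkM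
  rw [bit_eq_zero_of_lt (by omega), bit_eq_one_of_two_pow_sub_le_of_lt hkM (by omega) (by omega)]
  decide

/-- if `j = i + τ` with `2^{m−2} − 2^k ≤ τ ≤ 2^{m−2} − 1` and
`i, j ∈ [0, 2^{m−2}−1]`, `0 ≤ k ≤ m−3`, then the `k`-th binary digits of `i` and `j` differ. -/
theorem stmt_4 (m k i j τ : ℕ) (hm : 4 ≤ m) (hk : k ≤ m - 3)
    (hij : j = i + τ) (hj : j ≤ 2 ^ (m - 2) - 1)
    (hτ1 : 2 ^ (m - 2) - 2 ^ k ≤ τ) (hτ2 : τ ≤ 2 ^ (m - 2) - 1) :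
    bit i k ≠ bit j k :=
  stmt_4_general m k i j τ hm hk hij hj hτ1
end

section
/- With G₁,G₂ as in the CZCP construction (Lemma 2 context), the shifted pair (c,d)=(Ψ_{2^{m−2}−1}(G₁+(q/2)x_{m−2}), Ψ_{2^{m−2}−1}(G₂+(q/2)x_{m−2})) is also a (2^{m−1}+2, 2^{π(m−3)}+1)-CZCP. -/
open Finset Complex

/-!
Write `m = M + 2`, `p = π (M - 1)` and `g` for the path form `∑ x_{π k} x_{π (k+1)}` on the low
`M` bits. Since `ω^{q/2} = -1`, both sequences are `±ω^c`, with signs given by exponents mod 2.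
The truncation keeps the index `2^M - 1`, the block `x_M = 1`, the block `x_{M+1} = 1` and the
index `2^{M+1} + 2^M`. On the two blocks `(c, d)` is `(g + 1, g + 1 + x_p)`, resp.
`(g + x_{π 0} + M, g + x_{π 0} + M + x_p)`: Golay pairs of Davis–Jedwab type for the reversed path,
which starts at `p`, so the correlation terms inside a block cancel. Writing `d = c + δ`, where `δ`
is `0`, `x_p`, `x_p`, `1` on the four parts, an auto- or cross-correlation term vanishes as soon as
`δ` differs at its two ends. For `τ ≥ 2^{M+1} + 1 - 2^p` this happens for every term; for
`τ ≤ 2^p + 1` only two terms crossing block boundaries survive, and they cancel by the complement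
identity `g (2^M - 1 - t) = g t + (M - 1) + x_{π 0} t + x_p t`.
-/

namespace CZCP

def bitZ2 (t k : ℕ) : ZMod 2 := if t.testBit k then 1 else 0

lemma zmod_two_add_eq_one_of_ne {a b : ZMod 2} (h : a ≠ b) : a + b = 1 := by
  revert a b; decide

lemma bit_eq_toNat_testBit (t k : ℕ) : bit t k = (t.testBit k).toNat := by
  rw [Nat.testBit_eq_decide_div_mod_eq]
  rcases Nat.mod_two_eq_zero_or_one (t / 2 ^ k) with h | h <;> simp [bit, h]

lemma natCast_bit (t k : ℕ) : ((bit t k : ℕ) : ZMod 2) = bitZ2 t k := by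
  rw [bit_eq_toNat_testBit, bitZ2]; cases t.testBit k <;> rfl

lemma natCast_one_sub_bit (t k : ℕ) : ((1 - bit t k : ℕ) : ZMod 2) = 1 + bitZ2 t k := by
  rw [bit_eq_toNat_testBit, bitZ2]; cases t.testBit k <;> rfl

lemma bitZ2_eq_bitZ2_iff {a b k l : ℕ} : bitZ2 a k = bitZ2 b l ↔ a.testBit k = b.testBit l := by
  unfold bitZ2
  cases a.testBit k <;> cases b.testBit l <;> simp

lemma bitZ2_of_lt {t k : ℕ} (h : t < 2 ^ k) : bitZ2 t k = 0 := by
  simp [bitZ2, Nat.testBit_lt_two_pow h]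

@[simp] lemma bitZ2_zero (k : ℕ) : bitZ2 0 k = 0 := by simp [bitZ2]

lemma bitZ2_xor_two_pow (t j k : ℕ) :
    bitZ2 (t ^^^ 2 ^ j) k = bitZ2 t k + if j = k then 1 else 0 := by
  simp only [bitZ2, Nat.testBit_xor, Nat.testBit_two_pow]
  by_cases hjk : j = k <;> cases t.testBit k <;> simp only [hjk] <;> decide

lemma bitZ2_two_pow (j k : ℕ) : bitZ2 (2 ^ j) k = if j = k then 1 else 0 := by
  simpa using bitZ2_xor_two_pow 0 j k

lemma bitZ2_two_pow_sub_one_sub {M t k : ℕ} (ht : t < 2 ^ M) (hk : k < M) :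
    bitZ2 (2 ^ M - 1 - t) k = bitZ2 t k + 1 := by
  rw [show 2 ^ M - 1 - t = 2 ^ M - (t + 1) by omega, bitZ2, bitZ2,
    Nat.testBit_two_pow_sub_succ ht]
  cases t.testBit k <;> simp only [hk] <;> decide

lemma bitZ2_eq_one_of_two_pow_sub_le {M p t : ℕ} (hp : p < M) (h : 2 ^ M - 2 ^ p ≤ t)
    (ht : t < 2 ^ M) : bitZ2 t p = 1 := by
  have hs : 2 ^ M - 1 - t < 2 ^ p := by have := Nat.one_le_two_pow (n := p); omega
  have := bitZ2_two_pow_sub_one_sub (by omega : 2 ^ M - 1 - t < 2 ^ M) hp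
  rw [show 2 ^ M - 1 - (2 ^ M - 1 - t) = t by omega, bitZ2_of_lt hs] at this
  simpa using this

lemma xor_two_pow_eq_add {t j : ℕ} (h : t.testBit j = false) : t ^^^ 2 ^ j = t + 2 ^ j := by
  have hd := Nat.div_add_mod t (2 ^ j)
  have hr := Nat.mod_lt t (Nat.two_pow_pos j)
  have heven : Even (t / 2 ^ j) := by
    rw [Nat.testBit_eq_decide_div_mod_eq] at h
    simpa [Nat.even_iff] using h
  have hsum : t + 2 ^ j = 2 ^ j * (t / 2 ^ j ^^^ 2 ^ 0) + t % 2 ^ j := by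
    rw [pow_zero, Nat.xor_one_of_even heven]
    nth_rewrite 1 [← hd]
    ring
  refine Nat.eq_of_testBit_eq fun k => ?_
  rw [hsum, Nat.testBit_two_pow_mul_add _ hr, Nat.testBit_xor, Nat.testBit_two_pow]
  conv_lhs => rw [← hd, Nat.testBit_two_pow_mul_add _ hr]
  by_cases hk : k < j
  · simp [hk, show j ≠ k by omega]
  · simp only [hk, if_false, Nat.testBit_xor, Nat.testBit_two_pow]
    congr 2
    exact propext ⟨fun h => by omega, fun h => by omega⟩

lemma xor_two_pow_add_two_pow {t j : ℕ} (h : t.testBit j = true) : (t ^^^ 2 ^ j) + 2 ^ j = t := by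
  rw [← xor_two_pow_eq_add (by simp [Nat.testBit_xor, h]), Nat.xor_assoc, Nat.xor_self,
    Nat.xor_zero]

lemma xor_two_pow_add_comm {t j τ : ℕ} (h : t.testBit j = (t + τ).testBit j) :
    (t ^^^ 2 ^ j) + τ = (t + τ) ^^^ 2 ^ j := by
  cases ht : t.testBit j
  · rw [xor_two_pow_eq_add ht, xor_two_pow_eq_add (h ▸ ht)]
    omega
  · have h1 := xor_two_pow_add_two_pow ht
    have h2 := xor_two_pow_add_two_pow (h ▸ ht)
    omega

lemma bitZ2_two_pow_add {M t : ℕ} (ht : t < 2 ^ M) (k : ℕ) :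
    bitZ2 (2 ^ M + t) k = bitZ2 t k + if M = k then 1 else 0 := by
  rw [add_comm, ← xor_two_pow_eq_add (Nat.testBit_lt_two_pow ht), bitZ2_xor_two_pow]

lemma bitZ2_two_pow_add_self {M t : ℕ} (ht : t < 2 ^ M) : bitZ2 (2 ^ M + t) M = 1 := by
  rw [bitZ2_two_pow_add ht, if_pos rfl, bitZ2_of_lt ht, zero_add]

lemma bitZ2_two_pow_add_of_lt {N t k : ℕ} (ht : t < 2 ^ N) (hk : k < N) :
    bitZ2 (2 ^ N + t) k = bitZ2 t k := by
  rw [bitZ2_two_pow_add ht, if_neg (by omega), add_zero]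

def pathForm (M : ℕ) (π : ℕ → ℕ) (t : ℕ) : ZMod 2 :=
  ∑ k ∈ range (M - 1), bitZ2 t (π k) * bitZ2 t (π (k + 1))

@[simp] lemma pathForm_zero (M : ℕ) (π : ℕ → ℕ) : pathForm M π 0 = 0 := by
  simp [pathForm]

section PathForm
variable {M : ℕ} {π : ℕ → ℕ}

lemma pathForm_xor_two_pow (hinj : Set.InjOn π (Set.Iio M)) {β : ℕ} (hβ : β < M) (t : ℕ) :
    pathForm M π (t ^^^ 2 ^ π β) = pathForm M π t
      + (if β + 1 < M then bitZ2 t (π (β + 1)) else 0)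
      + (if β = 0 then 0 else bitZ2 t (π (β - 1))) := by
  have hbit : ∀ k < M, bitZ2 (t ^^^ 2 ^ π β) (π k) = bitZ2 t (π k) + if β = k then 1 else 0 :=
    fun k hk => by simp only [bitZ2_xor_two_pow, hinj.eq_iff hβ hk]
  have hterm : ∀ k ∈ range (M - 1),
      bitZ2 (t ^^^ 2 ^ π β) (π k) * bitZ2 (t ^^^ 2 ^ π β) (π (k + 1))
        = bitZ2 t (π k) * bitZ2 t (π (k + 1))
          + ((if β = k then bitZ2 t (π (k + 1)) else 0)
            + (if β = k + 1 then bitZ2 t (π k) else 0)) := by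
    intro k hk
    rw [mem_range] at hk
    rw [hbit k (by omega), hbit (k + 1) (by omega)]
    split_ifs <;> first | omega | ring
  rw [pathForm, sum_congr rfl hterm, sum_add_distrib, sum_add_distrib, sum_ite_eq, add_assoc]
  congr 2
  · simp only [mem_range, Nat.lt_sub_iff_add_lt]
  · rcases β with _ | b
    · simp only [Nat.right_eq_add, Nat.add_eq_zero_iff, one_ne_zero, and_false, ↓reduceIte,
        sum_const_zero]
    · simp only [Nat.add_right_cancel_iff, sum_ite_eq, mem_range, Nat.add_sub_cancel,
        if_neg (Nat.succ_ne_zero b), if_pos (show b < M - 1 by omega)]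

lemma pathForm_two_pow (hinj : Set.InjOn π (Set.Iio M)) {β : ℕ} (hβ : β < M) :
    pathForm M π (2 ^ π β) = 0 := by
  simpa only [pathForm, Nat.zero_xor, bitZ2_zero, mul_zero, sum_const_zero, ite_self, add_zero]
    using pathForm_xor_two_pow hinj hβ 0

lemma pathForm_two_pow_sub_one_sub (hmaps : Set.MapsTo π (Set.Iio M) (Set.Iio M)) {t : ℕ}
    (ht : t < 2 ^ M) :
    pathForm M π (2 ^ M - 1 - t)
      = pathForm M π t + ((M - 1 : ℕ) : ZMod 2) + bitZ2 t (π 0) + bitZ2 t (π (M - 1)) := by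
  have hterm : ∀ k ∈ range (M - 1),
      bitZ2 (2 ^ M - 1 - t) (π k) * bitZ2 (2 ^ M - 1 - t) (π (k + 1))
        = bitZ2 t (π k) * bitZ2 t (π (k + 1))
          + ((bitZ2 t (π (k + 1)) - bitZ2 t (π k)) + 1) := by
    intro k hk
    rw [mem_range] at hk
    rw [bitZ2_two_pow_sub_one_sub ht (hmaps (show k < M by omega)),
      bitZ2_two_pow_sub_one_sub ht (hmaps (show k + 1 < M by omega)), CharTwo.sub_eq_add]
    ring
  rw [pathForm, sum_congr rfl hterm, sum_add_distrib, sum_add_distrib,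
    sum_range_sub (fun k => bitZ2 t (π k)), CharTwo.sub_eq_add]
  simp only [sum_const, card_range, nsmul_eq_mul, mul_one, pathForm]
  ring

lemma pathForm_two_pow_sub_one (hmaps : Set.MapsTo π (Set.Iio M) (Set.Iio M)) :
    pathForm M π (2 ^ M - 1) = ((M - 1 : ℕ) : ZMod 2) := by
  simpa only [Nat.sub_zero, pathForm_zero, bitZ2_zero, zero_add, add_zero]
    using pathForm_two_pow_sub_one_sub hmaps (Nat.two_pow_pos M)

lemma pathForm_two_pow_add (hmaps : Set.MapsTo π (Set.Iio M) (Set.Iio M)) {N t : ℕ}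
    (hMN : M ≤ N) (ht : t < 2 ^ N) : pathForm M π (2 ^ N + t) = pathForm M π t := by
  refine sum_congr rfl fun k hk => ?_
  rw [mem_range] at hk
  have h0 : π k < M := hmaps (show k < M by omega)
  have h1 : π (k + 1) < M := hmaps (show k + 1 < M by omega)
  rw [bitZ2_two_pow_add ht, bitZ2_two_pow_add ht, if_neg (by omega), if_neg (by omega),
    add_zero, add_zero]

lemma pathForm_reverse (π : ℕ → ℕ) (t : ℕ) :
    pathForm M (fun k => π (M - 1 - k)) t = pathForm M π t := by
  rw [pathForm, pathForm, ← sum_range_reflect]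
  refine sum_congr rfl fun k hk => ?_
  rw [mem_range] at hk
  rw [show M - 1 - (M - 1 - 1 - k) = k + 1 by omega, show M - 1 - (M - 1 - 1 - k + 1) = k by omega,
    mul_comm]

lemma bijOn_reverse (hπ : Set.BijOn π (Set.Iio M) (Set.Iio M)) :
    Set.BijOn (fun k => π (M - 1 - k)) (Set.Iio M) (Set.Iio M) := by
  have hrev : Set.BijOn (fun k => M - 1 - k) (Set.Iio M) (Set.Iio M) := by
    refine ⟨fun k hk => ?_, fun a ha b hb h => ?_, fun k hk => ⟨M - 1 - k, ?_, ?_⟩⟩ <;>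
      simp only [Set.mem_Iio] at * <;> omega
  exact hπ.comp hrev

end PathForm

def sgn (x : ZMod 2) : ℤ := if x = 0 then 1 else -1

lemma sgn_zero : sgn 0 = 1 := rfl

lemma sgn_one : sgn 1 = -1 := rfl

lemma sgn_mul_sgn_add_sgn_mul_sgn (a a' d d' : ZMod 2) :
    sgn a * sgn a' + sgn (a + d) * sgn (a' + d') = sgn (a + a') * (1 + sgn (d + d')) := by
  revert a a' d d'; decide

lemma sgn_pair_eq_zero_of_add_eq_one {a a' d d' : ZMod 2} (h : d + d' = 1) :
    sgn a * sgn a' + sgn (a + d) * sgn (a' + d') = 0 := by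
  revert a a' d d'; decide

lemma sgn_cross_pair_eq_zero_of_add_eq_one {a a' d d' : ZMod 2} (h : d + d' = 1) :
    sgn a * sgn (a' + d') + sgn (a + d) * sgn a' = 0 := by
  revert a a' d d'; decide

def corr (N : ℕ) (a b : ℕ → ZMod 2) (τ : ℕ) : ℤ :=
  ∑ i ∈ range (N - τ), sgn (a i) * sgn (b (i + τ))

section Golay
variable {M : ℕ} {π : ℕ → ℕ} {ℓ c : ℕ → ZMod 2} {τ : ℕ}

def golayTerm (M : ℕ) (π : ℕ → ℕ) (ℓ : ℕ → ZMod 2) (τ t : ℕ) : ℤ :=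
  sgn (pathForm M π t + ℓ t + (pathForm M π (t + τ) + ℓ (t + τ)))
    * (1 + sgn (bitZ2 t (π 0) + bitZ2 (t + τ) (π 0)))

lemma exists_bitZ2_ne (hπ : Set.SurjOn π (Set.Iio M) (Set.Iio M)) (hτ : 1 ≤ τ) {t : ℕ}
    (ht : t + τ < 2 ^ M) : ∃ α < M, bitZ2 t (π α) ≠ bitZ2 (t + τ) (π α) := by
  by_contra! h
  have : t = t + τ := Nat.eq_of_testBit_eq fun k => by
    rcases lt_or_ge k M with hk | hk
    · obtain ⟨α, hα, rfl⟩ := hπ hk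
      exact bitZ2_eq_bitZ2_iff.mp (h α hα)
    · have := Nat.pow_le_pow_right two_pos hk
      rw [Nat.testBit_lt_two_pow (by omega), Nat.testBit_lt_two_pow (by omega)]
  omega

lemma bitZ2_xor_two_pow_ne_iff {t j : ℕ} (h : t.testBit j = (t + τ).testBit j) (k : ℕ) :
    bitZ2 (t ^^^ 2 ^ j) k ≠ bitZ2 ((t ^^^ 2 ^ j) + τ) k ↔ bitZ2 t k ≠ bitZ2 (t + τ) k := by
  rw [xor_two_pow_add_comm h, bitZ2_xor_two_pow, bitZ2_xor_two_pow, ne_eq, ne_eq, add_left_inj]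

lemma golayTerm_eq_zero_of_ne {t : ℕ} (h : bitZ2 t (π 0) ≠ bitZ2 (t + τ) (π 0)) :
    golayTerm M π ℓ τ t = 0 := by
  rw [golayTerm, zmod_two_add_eq_one_of_ne h, sgn_one, add_neg_cancel, mul_zero]

lemma pathForm_add_xor_two_pow_of_first_ne (hinj : Set.InjOn π (Set.Iio M))
    (hℓ : ∀ t, ∀ j < M, ℓ (t ^^^ 2 ^ j) = ℓ t + c j) {t β : ℕ} (hβ : β + 1 < M)
    (hne : bitZ2 t (π (β + 1)) ≠ bitZ2 (t + τ) (π (β + 1)))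
    (heq : ∀ γ ≤ β, bitZ2 t (π γ) = bitZ2 (t + τ) (π γ)) (hj : π β < M) :
    pathForm M π (t ^^^ 2 ^ π β) + ℓ (t ^^^ 2 ^ π β)
        + (pathForm M π ((t + τ) ^^^ 2 ^ π β) + ℓ ((t + τ) ^^^ 2 ^ π β))
      = pathForm M π t + ℓ t + (pathForm M π (t + τ) + ℓ (t + τ)) + 1 := by
  have hprev : (if β = 0 then 0 else bitZ2 t (π (β - 1)))
      + (if β = 0 then 0 else bitZ2 (t + τ) (π (β - 1))) = 0 := by
    split_ifs
    · exact add_zero 0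
    · rw [heq (β - 1) (by omega), CharTwo.add_self_eq_zero]
  rw [pathForm_xor_two_pow hinj (by omega), pathForm_xor_two_pow hinj (by omega), hℓ t _ hj,
    hℓ (t + τ) _ hj, if_pos hβ, if_pos hβ]
  linear_combination hprev + zmod_two_add_eq_one_of_ne hne + CharTwo.add_self_eq_zero (c (π β))

lemma golayTerm_xor_two_pow (hinj : Set.InjOn π (Set.Iio M))
    (hℓ : ∀ t, ∀ j < M, ℓ (t ^^^ 2 ^ j) = ℓ t + c j) {t β : ℕ} (hβ : β + 1 < M)
    (hne : bitZ2 t (π (β + 1)) ≠ bitZ2 (t + τ) (π (β + 1)))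
    (heq : ∀ γ ≤ β, bitZ2 t (π γ) = bitZ2 (t + τ) (π γ)) (hj : π β < M) :
    golayTerm M π ℓ τ (t ^^^ 2 ^ π β) = - golayTerm M π ℓ τ t := by
  rw [golayTerm, golayTerm, xor_two_pow_add_comm (bitZ2_eq_bitZ2_iff.mp (heq β le_rfl)),
    pathForm_add_xor_two_pow_of_first_ne hinj hℓ hβ hne heq hj, bitZ2_xor_two_pow,
    bitZ2_xor_two_pow]
  generalize pathForm M π t + ℓ t + (pathForm M π (t + τ) + ℓ (t + τ)) = s
  generalize bitZ2 t (π 0) = x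
  generalize bitZ2 (t + τ) (π 0) = y
  generalize (if π β = π 0 then (1 : ZMod 2) else 0) = e
  revert s x y e
  decide

theorem corr_add_corr_pathForm_eq_zero (hπ : Set.BijOn π (Set.Iio M) (Set.Iio M))
    (hℓ : ∀ t, ∀ j < M, ℓ (t ^^^ 2 ^ j) = ℓ t + c j) (hτ : 1 ≤ τ) :
    corr (2 ^ M) (fun t => pathForm M π t + ℓ t) (fun t => pathForm M π t + ℓ t) τ
      + corr (2 ^ M) (fun t => pathForm M π t + ℓ t + bitZ2 t (π 0))
          (fun t => pathForm M π t + ℓ t + bitZ2 t (π 0)) τ = 0 := by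
  rw [corr, corr, ← sum_add_distrib, sum_congr rfl fun t _ => sgn_mul_sgn_add_sgn_mul_sgn _ _ _ _]
  change ∑ t ∈ range (2 ^ M - τ), golayTerm M π ℓ τ t = 0
  have hlt : ∀ t ∈ range (2 ^ M - τ), t + τ < 2 ^ M := fun t ht => by rw [mem_range] at ht; omega
  have hex : ∀ t ht, ∃ α, bitZ2 t (π α) ≠ bitZ2 (t + τ) (π α) := fun t ht =>
    (exists_bitZ2_ne hπ.surjOn hτ (hlt t ht)).imp fun _ h => h.2
  -- Davis–Jedwab pairing: flip the bit preceding, along `π`, the first bit where `t` and `t + τ`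
  -- differ; when that first bit is `π 0` the summand vanishes on its own.
  have hflip : ∀ t ht β, Nat.find (hex t ht) = β + 1 →
      ∃ ht' : t ^^^ 2 ^ π β ∈ range (2 ^ M - τ),
        golayTerm M π ℓ τ (t ^^^ 2 ^ π β) = - golayTerm M π ℓ τ t
          ∧ Nat.find (hex _ ht') = β + 1 := by
    intro t ht β hβ
    obtain ⟨α, hαM, hα⟩ := exists_bitZ2_ne hπ.surjOn hτ (hlt t ht)
    have hβM : β + 1 < M := hβ ▸ (Nat.find_min' _ hα).trans_lt hαM
    have hj : π β < M := hπ.mapsTo (show β < M by omega)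
    have hne := hβ ▸ Nat.find_spec (hex t ht)
    have heq : ∀ γ ≤ β, bitZ2 t (π γ) = bitZ2 (t + τ) (π γ) := fun γ hγ =>
      not_not.mp (Nat.find_min (hex t ht) (by omega))
    have hbit := bitZ2_eq_bitZ2_iff.mp (heq β le_rfl)
    have ht' : t ^^^ 2 ^ π β ∈ range (2 ^ M - τ) := by
      have := Nat.xor_lt_two_pow (hlt t ht) (Nat.pow_lt_pow_right one_lt_two hj)
      rw [← xor_two_pow_add_comm hbit] at this
      rw [mem_range]; omega
    exact ⟨ht', golayTerm_xor_two_pow hπ.injOn hℓ hβM hne heq hj,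
      (Nat.find_congr' (bitZ2_xor_two_pow_ne_iff hbit _)).trans hβ⟩
  have hzero : ∀ t ht, Nat.find (hex t ht) = 0 → golayTerm M π ℓ τ t = 0 := fun t ht h0 =>
    golayTerm_eq_zero_of_ne (h0 ▸ Nat.find_spec (hex t ht))
  refine sum_involution
    (fun t ht => if Nat.find (hex t ht) = 0 then t else t ^^^ 2 ^ π (Nat.find (hex t ht) - 1))
    (fun t ht => ?_) (fun t ht hne => ?_) (fun t ht => ?_) (fun t ht => ?_) <;>
    split_ifs with h0
  · rw [hzero t ht h0, add_zero]
  · rw [(hflip t ht _ (by omega)).2.1, add_neg_cancel]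
  · exact absurd (hzero t ht h0) hne
  · intro h
    have := congrArg (bitZ2 · (π (Nat.find (hex t ht) - 1))) h
    simp [bitZ2_xor_two_pow] at this
  · exact ht
  · exact (hflip t ht _ (by omega)).1
  · rfl
  · obtain ⟨_, -, hfind⟩ := hflip t ht (Nat.find (hex t ht) - 1) (by omega)
    rw [hfind, if_neg (Nat.succ_ne_zero _), Nat.add_sub_cancel, Nat.xor_assoc, Nat.xor_self,
      Nat.xor_zero]

end Golay

-- For `m = M + 2`: `G₁ + (q/2) x_{m-2} = (q/2) E + c` and `G₂ + (q/2) x_{m-2} = (q/2) E' + c`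
-- with `E ≡ expC` and `E' ≡ expC + diffExp` mod 2; `seqC` and `seqD` are their truncations.
def expC (M : ℕ) (π : ℕ → ℕ) (j : ℕ) : ZMod 2 :=
  (1 + bitZ2 j (M + 1)) * bitZ2 j M * pathForm M π j
    + bitZ2 j (M + 1) * (1 + bitZ2 j M) * (pathForm M π j + bitZ2 j (π 0) + M)
    + bitZ2 j (M + 1) * bitZ2 j M + bitZ2 j M

def diffExp (M : ℕ) (π : ℕ → ℕ) (j : ℕ) : ZMod 2 :=
  bitZ2 j (M + 1) * bitZ2 j M + bitZ2 j (π (M - 1)) * (bitZ2 j (M + 1) + bitZ2 j M)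

def seqC (M : ℕ) (π : ℕ → ℕ) (i : ℕ) : ZMod 2 := expC M π (i + (2 ^ M - 1))

def seqDiff (M : ℕ) (π : ℕ → ℕ) (i : ℕ) : ZMod 2 := diffExp M π (i + (2 ^ M - 1))

def seqD (M : ℕ) (π : ℕ → ℕ) (i : ℕ) : ZMod 2 := seqC M π i + seqDiff M π i

section Window
variable {M : ℕ} {π : ℕ → ℕ}

lemma seqC_zero : seqC M π 0 = 0 := by
  have h : 2 ^ M - 1 < 2 ^ M := Nat.sub_lt (Nat.two_pow_pos M) one_pos
  simp [seqC, expC, bitZ2_of_lt h, bitZ2_of_lt (h.trans (Nat.pow_lt_pow_succ one_lt_two))]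

lemma seqDiff_zero : seqDiff M π 0 = 0 := by
  have h : 2 ^ M - 1 < 2 ^ M := Nat.sub_lt (Nat.two_pow_pos M) one_pos
  simp [seqDiff, diffExp, bitZ2_of_lt h, bitZ2_of_lt (h.trans (Nat.pow_lt_pow_succ one_lt_two))]

lemma seqC_two_pow_succ_add_one : seqC M π (2 ^ (M + 1) + 1) = 0 := by
  have hw : 2 ^ (M + 1) + 1 + (2 ^ M - 1) = 2 ^ (M + 1) + 2 ^ M := by
    have := Nat.two_pow_pos M; omega
  have h := Nat.pow_lt_pow_succ (n := M) one_lt_two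
  rw [seqC, hw, expC, bitZ2_two_pow_add_self h, bitZ2_two_pow_add_of_lt h (by omega),
    bitZ2_two_pow, if_pos rfl]
  ring_nf
  reduce_mod_char

variable (hmaps : Set.MapsTo π (Set.Iio M) (Set.Iio M))
include hmaps

lemma seqC_one_add {t : ℕ} (ht : t < 2 ^ M) : seqC M π (1 + t) = pathForm M π t + 1 := by
  have hw : 1 + t + (2 ^ M - 1) = 2 ^ M + t := by have := Nat.two_pow_pos M; omega
  rw [seqC, hw, expC, bitZ2_two_pow_add_self ht,
    bitZ2_of_lt (by have := Nat.pow_lt_pow_succ (n := M) one_lt_two; omega :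
      2 ^ M + t < 2 ^ (M + 1)),
    pathForm_two_pow_add hmaps le_rfl ht]
  ring

lemma seqDiff_one_add (hM : 1 ≤ M) {t : ℕ} (ht : t < 2 ^ M) :
    seqDiff M π (1 + t) = bitZ2 t (π (M - 1)) := by
  have hw : 1 + t + (2 ^ M - 1) = 2 ^ M + t := by have := Nat.two_pow_pos M; omega
  rw [seqDiff, hw, diffExp, bitZ2_two_pow_add_self ht,
    bitZ2_of_lt (by have := Nat.pow_lt_pow_succ (n := M) one_lt_two; omega :
      2 ^ M + t < 2 ^ (M + 1)),
    bitZ2_two_pow_add_of_lt ht (hmaps (show M - 1 < M by omega))]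
  ring

lemma seqC_two_pow_add_one_add (hM : 1 ≤ M) {u : ℕ} (hu : u < 2 ^ M) :
    seqC M π (2 ^ M + 1 + u) = pathForm M π u + bitZ2 u (π 0) + M := by
  have hw : 2 ^ M + 1 + u + (2 ^ M - 1) = 2 ^ (M + 1) + u := by
    have := Nat.two_pow_pos M; rw [pow_succ]; omega
  have hu' := hu.trans (Nat.pow_lt_pow_succ (n := M) one_lt_two)
  rw [seqC, hw, expC, bitZ2_two_pow_add_self hu', bitZ2_two_pow_add_of_lt hu' (by omega),
    bitZ2_of_lt hu,
    bitZ2_two_pow_add_of_lt hu' ((hmaps (show 0 < M by omega)).trans (Nat.lt_succ_self M)),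
    pathForm_two_pow_add hmaps (by omega) hu']
  ring

lemma seqDiff_two_pow_add_one_add (hM : 1 ≤ M) {u : ℕ} (hu : u < 2 ^ M) :
    seqDiff M π (2 ^ M + 1 + u) = bitZ2 u (π (M - 1)) := by
  have hw : 2 ^ M + 1 + u + (2 ^ M - 1) = 2 ^ (M + 1) + u := by
    have := Nat.two_pow_pos M; rw [pow_succ]; omega
  have hu' := hu.trans (Nat.pow_lt_pow_succ (n := M) one_lt_two)
  rw [seqDiff, hw, diffExp, bitZ2_two_pow_add_self hu', bitZ2_two_pow_add_of_lt hu' (by omega),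
    bitZ2_of_lt hu,
    bitZ2_two_pow_add_of_lt hu' ((hmaps (show M - 1 < M by omega)).trans (Nat.lt_succ_self M))]
  ring

lemma seqDiff_two_pow_succ_add_one (hM : 1 ≤ M) : seqDiff M π (2 ^ (M + 1) + 1) = 1 := by
  have hw : 2 ^ (M + 1) + 1 + (2 ^ M - 1) = 2 ^ (M + 1) + 2 ^ M := by
    have := Nat.two_pow_pos M; omega
  have h := Nat.pow_lt_pow_succ (n := M) one_lt_two
  have hp : π (M - 1) < M := hmaps (show M - 1 < M by omega)
  rw [seqDiff, hw, diffExp, bitZ2_two_pow_add_self h, bitZ2_two_pow_add_of_lt h (by omega),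
    bitZ2_two_pow_add_of_lt h (by omega), bitZ2_two_pow, bitZ2_two_pow, if_pos rfl, if_neg hp.ne']
  decide

end Window

section Tail
variable {M : ℕ} {π : ℕ → ℕ} (hM : 1 ≤ M) (hmaps : Set.MapsTo π (Set.Iio M) (Set.Iio M))
include hM hmaps

lemma seqDiff_eq_zero_of_le {i : ℕ} (hi : i ≤ 2 ^ π (M - 1)) : seqDiff M π i = 0 := by
  have hp : π (M - 1) < M := hmaps (show M - 1 < M by omega)
  have := Nat.pow_lt_pow_right one_lt_two hp
  rcases i with _ | t
  · exact seqDiff_zero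
  · rw [add_comm, seqDiff_one_add hmaps hM (by omega), bitZ2_of_lt (by omega)]

lemma seqDiff_eq_one_of_le {i : ℕ} (hi : 2 ^ (M + 1) + 1 - 2 ^ π (M - 1) ≤ i)
    (hi' : i ≤ 2 ^ (M + 1) + 1) : seqDiff M π i = 1 := by
  have hp : π (M - 1) < M := hmaps (show M - 1 < M by omega)
  have h1 := Nat.pow_le_pow_right two_pos (show π (M - 1) + 1 ≤ M by omega)
  have h2 : 2 ^ (M + 1) = 2 ^ M + 2 ^ M := by rw [pow_succ]; omega
  rw [pow_succ] at h1
  rcases eq_or_lt_of_le hi' with rfl | hlt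
  · exact seqDiff_two_pow_succ_add_one hmaps hM
  · obtain ⟨u, rfl⟩ : ∃ u, i = 2 ^ M + 1 + u := ⟨i - (2 ^ M + 1), by omega⟩
    rw [seqDiff_two_pow_add_one_add hmaps hM (by omega),
      bitZ2_eq_one_of_two_pow_sub_le hp (by omega) (by omega)]

theorem corr_seq_eq_zero_of_ge {τ : ℕ} (hτ : 2 ^ (M + 1) + 2 - (2 ^ π (M - 1) + 1) ≤ τ) :
    corr (2 ^ (M + 1) + 2) (seqC M π) (seqC M π) τ
        + corr (2 ^ (M + 1) + 2) (seqD M π) (seqD M π) τ = 0 ∧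
      corr (2 ^ (M + 1) + 2) (seqC M π) (seqD M π) τ
        + corr (2 ^ (M + 1) + 2) (seqD M π) (seqC M π) τ = 0 := by
  have hp : 2 ^ π (M - 1) < 2 ^ (M + 1) :=
    Nat.pow_lt_pow_right one_lt_two ((hmaps (show M - 1 < M by omega)).trans (by omega))
  have hdiff : ∀ i ∈ range (2 ^ (M + 1) + 2 - τ), seqDiff M π i + seqDiff M π (i + τ) = 1 := by
    intro i hi
    rw [mem_range] at hi
    rw [seqDiff_eq_zero_of_le hM hmaps (by omega),
      seqDiff_eq_one_of_le hM hmaps (by omega) (by omega), zero_add]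
  constructor <;> rw [corr, corr, ← sum_add_distrib] <;> refine sum_eq_zero fun i hi => ?_
  · exact sgn_pair_eq_zero_of_add_eq_one (hdiff i hi)
  · exact sgn_cross_pair_eq_zero_of_add_eq_one (hdiff i hi)

end Tail

section Head
variable {M : ℕ} {π : ℕ → ℕ} {τ : ℕ}

def autoTerm (M : ℕ) (π : ℕ → ℕ) (τ i : ℕ) : ℤ :=
  sgn (seqC M π i) * sgn (seqC M π (i + τ)) + sgn (seqD M π i) * sgn (seqD M π (i + τ))

variable (hM : 2 ≤ M) (hπ : Set.BijOn π (Set.Iio M) (Set.Iio M))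
include hM hπ

lemma sum_autoTerm_one_add_eq_zero (hτ : 1 ≤ τ) :
    ∑ k ∈ range (2 ^ M - τ), autoTerm M π τ (1 + k) = 0 := by
  have h := corr_add_corr_pathForm_eq_zero (bijOn_reverse hπ) (ℓ := fun _ => 1)
    (c := fun _ => 0) (fun _ _ _ => (add_zero _).symm) hτ
  rw [corr, corr, ← sum_add_distrib] at h
  rw [← h]
  refine sum_congr rfl fun k hk => ?_
  rw [mem_range] at hk
  rw [autoTerm, seqD, seqD, show 1 + k + τ = 1 + (k + τ) by ring]
  simp only [seqC_one_add hπ.mapsTo (show k < 2 ^ M by omega),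
    seqC_one_add hπ.mapsTo (show k + τ < 2 ^ M by omega),
    seqDiff_one_add hπ.mapsTo (by omega) (show k < 2 ^ M by omega),
    seqDiff_one_add hπ.mapsTo (by omega) (show k + τ < 2 ^ M by omega),
    pathForm_reverse, Nat.sub_zero]

lemma sum_autoTerm_two_pow_add_one_add_eq_zero (hτ : 1 ≤ τ) :
    ∑ k ∈ range (2 ^ M - τ), autoTerm M π τ (2 ^ M + 1 + k) = 0 := by
  have h := corr_add_corr_pathForm_eq_zero (bijOn_reverse hπ)
    (ℓ := fun t => bitZ2 t (π 0) + M) (c := fun j => if j = π 0 then 1 else 0)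
    (fun t j _ => by rw [bitZ2_xor_two_pow, add_right_comm]) hτ
  rw [corr, corr, ← sum_add_distrib] at h
  rw [← h]
  refine sum_congr rfl fun k hk => ?_
  rw [mem_range] at hk
  rw [autoTerm, seqD, seqD, show 2 ^ M + 1 + k + τ = 2 ^ M + 1 + (k + τ) by ring]
  simp only [seqC_two_pow_add_one_add hπ.mapsTo (by omega) (show k < 2 ^ M by omega),
    seqC_two_pow_add_one_add hπ.mapsTo (by omega) (show k + τ < 2 ^ M by omega),
    seqDiff_two_pow_add_one_add hπ.mapsTo (by omega) (show k < 2 ^ M by omega),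
    seqDiff_two_pow_add_one_add hπ.mapsTo (by omega) (show k + τ < 2 ^ M by omega),
    pathForm_reverse, Nat.sub_zero]
  simp only [add_assoc]

lemma autoTerm_zero_eq {t : ℕ} (ht : t < 2 ^ M) (hτ : τ = 1 + t) :
    autoTerm M π τ 0
      = sgn (pathForm M π t + 1) + sgn (pathForm M π t + 1 + bitZ2 t (π (M - 1))) := by
  rw [autoTerm, seqD, seqD, zero_add, hτ, seqC_zero, seqDiff_zero, seqC_one_add hπ.mapsTo ht,
    seqDiff_one_add hπ.mapsTo (by omega) ht, add_zero, sgn_zero, one_mul, one_mul]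

lemma autoTerm_one_add_eq {t u : ℕ} (ht : t < 2 ^ M) (hu : u < 2 ^ M)
    (htu : t + τ = 2 ^ M + u) :
    autoTerm M π τ (1 + t)
      = sgn (pathForm M π t + 1) * sgn (pathForm M π u + bitZ2 u (π 0) + M)
        + sgn (pathForm M π t + 1 + bitZ2 t (π (M - 1)))
          * sgn (pathForm M π u + bitZ2 u (π 0) + M + bitZ2 u (π (M - 1))) := by
  rw [autoTerm, seqD, seqD, show 1 + t + τ = 2 ^ M + 1 + u by omega, seqC_one_add hπ.mapsTo ht,
    seqDiff_one_add hπ.mapsTo (by omega) ht, seqC_two_pow_add_one_add hπ.mapsTo (by omega) hu,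
    seqDiff_two_pow_add_one_add hπ.mapsTo (by omega) hu]

lemma autoTerm_two_pow_add_one_add_eq {u : ℕ} (hu : u < 2 ^ M) (huτ : u + τ = 2 ^ M) :
    autoTerm M π τ (2 ^ M + 1 + u)
      = sgn (pathForm M π u + bitZ2 u (π 0) + M)
        - sgn (pathForm M π u + bitZ2 u (π 0) + M + bitZ2 u (π (M - 1))) := by
  rw [autoTerm, seqD, seqD, show 2 ^ M + 1 + u + τ = 2 ^ (M + 1) + 1 by rw [pow_succ]; omega,
    seqC_two_pow_add_one_add hπ.mapsTo (by omega) hu,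
    seqDiff_two_pow_add_one_add hπ.mapsTo (by omega) hu, seqC_two_pow_succ_add_one,
    seqDiff_two_pow_succ_add_one hπ.mapsTo (by omega), zero_add, sgn_zero, sgn_one]
  ring

lemma autoTerm_one_add_eq_zero {t u : ℕ} (ht : t < 2 ^ M) (hu : u < 2 ^ M)
    (htu : t + τ = 2 ^ M + u) (ht1 : bitZ2 t (π (M - 1)) = 1) (hu0 : bitZ2 u (π (M - 1)) = 0) :
    autoTerm M π τ (1 + t) = 0 := by
  rw [autoTerm_one_add_eq hM hπ ht hu htu, ht1, hu0]
  exact sgn_pair_eq_zero_of_add_eq_one (add_zero 1)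

lemma crossing_sum_eq_zero_of_le (hτ : 1 ≤ τ) (hτp : τ ≤ 2 ^ π (M - 1)) :
    autoTerm M π τ 0 + ∑ k ∈ range τ, autoTerm M π τ (1 + (2 ^ M - τ) + k)
      + autoTerm M π τ (2 ^ M + 1 + (2 ^ M - τ)) = 0 := by
  have hmaps := hπ.mapsTo
  have hpM : π (M - 1) < M := hmaps (show M - 1 < M by omega)
  have hp := Nat.pow_lt_pow_right one_lt_two hpM
  have hXY : ∑ k ∈ range τ, autoTerm M π τ (1 + (2 ^ M - τ) + k) = 0 := by
    refine sum_eq_zero fun k hk => ?_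
    rw [mem_range] at hk
    rw [add_assoc]
    exact autoTerm_one_add_eq_zero hM hπ (u := k) (by omega) (by omega) (by omega)
      (bitZ2_eq_one_of_two_pow_sub_le hpM (by omega) (by omega)) (bitZ2_of_lt (by omega))
  have ht : τ - 1 < 2 ^ M := by omega
  have hu : 2 ^ M - 1 - (τ - 1) < 2 ^ M := by omega
  rw [hXY, add_zero, autoTerm_zero_eq hM hπ ht (by omega),
    show 2 ^ M - τ = 2 ^ M - 1 - (τ - 1) by omega,
    autoTerm_two_pow_add_one_add_eq hM hπ hu (by omega),
    bitZ2_eq_one_of_two_pow_sub_le hpM (by omega) hu, pathForm_two_pow_sub_one_sub hmaps ht,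
    bitZ2_two_pow_sub_one_sub ht (hmaps (show 0 < M by omega)),
    bitZ2_of_lt (by omega : τ - 1 < 2 ^ π (M - 1)),
    Nat.cast_pred (by omega)]
  generalize pathForm M π (τ - 1) = g
  generalize bitZ2 (τ - 1) (π 0) = a
  generalize (M : ZMod 2) = m
  revert g a m
  decide

lemma crossing_sum_eq_zero_of_eq (hτ : τ = 2 ^ π (M - 1) + 1) :
    autoTerm M π τ 0 + ∑ k ∈ range τ, autoTerm M π τ (1 + (2 ^ M - τ) + k)
      + autoTerm M π τ (2 ^ M + 1 + (2 ^ M - τ)) = 0 := by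
  have hmaps := hπ.mapsTo
  have hpM : π (M - 1) < M := hmaps (show M - 1 < M by omega)
  have hp := Nat.pow_lt_pow_right one_lt_two hpM
  have hp0 := Nat.two_pow_pos (π (M - 1))
  have hg : pathForm M π (2 ^ π (M - 1)) = 0 := pathForm_two_pow hπ.injOn (by omega)
  have hx0 : bitZ2 (2 ^ π (M - 1)) (π 0) = 0 := by
    rw [bitZ2_two_pow,
      if_neg (hπ.injOn.ne (show M - 1 < M by omega) (show 0 < M by omega) (by omega))]
  have hxp : bitZ2 (2 ^ π (M - 1)) (π (M - 1)) = 1 := by rw [bitZ2_two_pow, if_pos rfl]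
  have hτ1 : 2 ^ π (M - 1) < τ := hτ ▸ Nat.lt_succ_self _
  have hτ2 : τ ≤ 2 ^ π (M - 1) + 1 := hτ.le
  have hc : 2 ^ M - τ = 2 ^ M - 1 - 2 ^ π (M - 1) := by omega
  have hc' : 2 ^ M - 1 - 2 ^ π (M - 1) < 2 ^ M := by omega
  have hM1 : 2 ^ M - 1 < 2 ^ M := by omega
  have hXY : ∑ k ∈ range τ, autoTerm M π τ (1 + (2 ^ M - τ) + k)
      = autoTerm M π τ (1 + (2 ^ M - 1 - 2 ^ π (M - 1))) + autoTerm M π τ (1 + (2 ^ M - 1)) := by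
    rw [hc, sum_eq_add_of_mem 0 (2 ^ π (M - 1)) (by simp; omega) (by simp; omega) hp0.ne,
      add_zero, add_assoc, show 2 ^ M - 1 - 2 ^ π (M - 1) + 2 ^ π (M - 1) = 2 ^ M - 1 by omega]
    intro k hk hk0
    rw [mem_range] at hk
    rw [add_assoc]
    exact autoTerm_one_add_eq_zero hM hπ (u := k) (by omega) (by omega) (by omega)
      (bitZ2_eq_one_of_two_pow_sub_le hpM (by omega) (by omega)) (bitZ2_of_lt (by omega))
  rw [hXY, autoTerm_zero_eq hM hπ hp (by omega),
    autoTerm_one_add_eq hM hπ hc' (Nat.two_pow_pos M) (by omega),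
    autoTerm_one_add_eq hM hπ hM1 hp (by omega), hc,
    autoTerm_two_pow_add_one_add_eq hM hπ hc' (by omega),
    bitZ2_eq_one_of_two_pow_sub_le hpM (by omega) hM1, pathForm_two_pow_sub_one_sub hmaps hp,
    bitZ2_two_pow_sub_one_sub hp hpM, bitZ2_two_pow_sub_one_sub hp (hmaps (show 0 < M by omega)),
    hg, pathForm_two_pow_sub_one hmaps, hx0, hxp, pathForm_zero, bitZ2_zero, bitZ2_zero,
    Nat.cast_pred (by omega)]
  generalize (M : ZMod 2) = m
  revert m
  decide

theorem corr_seqC_add_corr_seqD_eq_zero_of_le (hτ : 1 ≤ τ) (hτ' : τ ≤ 2 ^ π (M - 1) + 1) :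
    corr (2 ^ (M + 1) + 2) (seqC M π) (seqC M π) τ
      + corr (2 ^ (M + 1) + 2) (seqD M π) (seqD M π) τ = 0 := by
  have hp : 2 ^ π (M - 1) < 2 ^ M :=
    Nat.pow_lt_pow_right one_lt_two (hπ.mapsTo (show M - 1 < M by omega))
  have hM2 : 2 ^ (M + 1) = 2 ^ M + 2 ^ M := by rw [pow_succ]; omega
  have hsum : corr (2 ^ (M + 1) + 2) (seqC M π) (seqC M π) τ
      + corr (2 ^ (M + 1) + 2) (seqD M π) (seqD M π) τ
      = ∑ i ∈ range (1 + (2 ^ M - τ) + τ + (2 ^ M - τ) + 1), autoTerm M π τ i := by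
    rw [corr, corr, ← sum_add_distrib,
      show 2 ^ (M + 1) + 2 - τ = 1 + (2 ^ M - τ) + τ + (2 ^ M - τ) + 1 by omega]
    rfl
  rw [hsum, sum_range_add, sum_range_add, sum_range_add, sum_range_add, sum_range_one,
    sum_range_one, show 1 + (2 ^ M - τ) + τ = 2 ^ M + 1 by omega,
    sum_autoTerm_one_add_eq_zero hM hπ hτ,
    sum_autoTerm_two_pow_add_one_add_eq_zero hM hπ hτ, add_zero, add_zero, add_zero]
  rcases lt_or_eq_of_le hτ' with h | h
  · exact crossing_sum_eq_zero_of_le hM hπ hτ (by omega)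
  · exact crossing_sum_eq_zero_of_eq hM hπ h

end Head

lemma omegaq_pow_mul_conj (q c : ℕ) : omegaq q ^ c * (starRingEnd ℂ) (omegaq q ^ c) = 1 := by
  have h : omegaq q = Complex.exp ((2 * Real.pi / q : ℝ) * Complex.I) := by
    rw [omegaq]; push_cast; ring_nf
  rw [Complex.mul_conj', norm_pow, h, Complex.norm_exp_ofReal_mul_I, one_pow, Complex.ofReal_one,
    one_pow]

lemma omegaq_pow_half {q : ℕ} (hq : q ≠ 0) (hq2 : 2 ∣ q) : omegaq q ^ (q / 2) = -1 := by
  obtain ⟨r, rfl⟩ := hq2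
  have hr : (r : ℂ) ≠ 0 := by exact_mod_cast (by omega : r ≠ 0)
  rw [omegaq, ← Complex.exp_nat_mul, Nat.mul_div_cancel_left r two_pos, ← Complex.exp_pi_mul_I]
  congr 1
  push_cast
  field_simp

lemma neg_one_pow_eq_sgn (n : ℕ) : (-1 : ℂ) ^ n = sgn (n : ZMod 2) := by
  rcases Nat.even_or_odd n with h | h
  · rw [h.neg_one_pow, ZMod.natCast_eq_zero_iff_even.mpr h, sgn_zero, Int.cast_one]
  · rw [h.neg_one_pow, ZMod.natCast_eq_one_iff_odd.mpr h, sgn_one, Int.cast_neg, Int.cast_one]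

lemma omegaq_pow_half_mul_add {q : ℕ} (hq : q ≠ 0) (hq2 : 2 ∣ q) (n c : ℕ) :
    omegaq q ^ (q / 2 * n + c) = sgn (n : ZMod 2) * omegaq q ^ c := by
  rw [pow_add, pow_mul, omegaq_pow_half hq hq2, neg_one_pow_eq_sgn]

lemma omegaq_pow_eq_sgn_mul {q : ℕ} (hq : q ≠ 0) (hq2 : 2 ∣ q) {a b d c : ℕ} {e : ZMod 2}
    (he : ((a + b + d : ℕ) : ZMod 2) = e) :
    omegaq q ^ (q / 2 * a + c + q / 2 * b + q / 2 * d) = sgn e * omegaq q ^ c := by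
  rw [show q / 2 * a + c + q / 2 * b + q / 2 * d = q / 2 * (a + b + d) + c by ring,
    omegaq_pow_half_mul_add hq hq2, he]

lemma acorr_sgn_mul {z : ℂ} (hz : z * (starRingEnd ℂ) z = 1) (N : ℕ) (a b : ℕ → ZMod 2)
    (τ : ℕ) :
    acorr N (fun i => sgn (a i) * z) (fun i => sgn (b i) * z) τ = corr N a b τ := by
  rw [acorr, corr, Int.cast_sum]
  refine sum_congr rfl fun i _ => ?_
  rw [map_mul, map_intCast, Int.cast_mul]
  linear_combination (sgn (a i) * sgn (b (i + τ)) : ℂ) * hz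

end CZCP

open CZCP

/-- Lemma 4, first part: the shifted pair
(Ψ_{2^{m−2}−1}(G₁+(q/2)x_{m−2}), Ψ_{2^{m−2}−1}(G₂+(q/2)x_{m−2})) is also a
(2^{m−1}+2, 2^{π(m−3)}+1)-CZCP. -/
theorem stmt_6 (q m c : ℕ) (hq : 2 ≤ q) (hq2 : 2 ∣ q) (hm : 4 ≤ m)
    (π : ℕ → ℕ) (hπ : Set.BijOn π (Set.Iio (m - 2)) (Set.Iio (m - 2)))
    (g G G₁ G₂ : ℕ → ℕ)
    (hg : ∀ i, g i = ∑ k ∈ Finset.range (m - 3), bit i (π k) * bit i (π (k + 1)))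
    (hG : ∀ i, G i = q / 2 * ((1 - bit i (m - 1)) * bit i (m - 2) * g i
        + bit i (m - 1) * (1 - bit i (m - 2)) * (g i + bit i (π 0) + (m - 2))) + c)
    (hG₁ : ∀ i, G₁ i = G i + q / 2 * (bit i (m - 1) * bit i (m - 2)))
    (hG₂ : ∀ i, G₂ i = G i + q / 2 * (bit i (π (m - 3)) * (bit i (m - 1) + bit i (m - 2))))
    (cs ds : ℕ → ℂ)
    (hcs : ∀ i, cs i = omegaq q ^ (G₁ (i + (2 ^ (m - 2) - 1))
        + q / 2 * bit (i + (2 ^ (m - 2) - 1)) (m - 2)))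
    (hds : ∀ i, ds i = omegaq q ^ (G₂ (i + (2 ^ (m - 2) - 1))
        + q / 2 * bit (i + (2 ^ (m - 2) - 1)) (m - 2))) :
    (∀ τ : ℕ, (1 ≤ τ ∧ τ ≤ 2 ^ π (m - 3) + 1) ∨
        (2 ^ (m - 1) + 2 - (2 ^ π (m - 3) + 1) ≤ τ ∧ τ ≤ 2 ^ (m - 1) + 1) →
      acorr (2 ^ (m - 1) + 2) cs cs τ + acorr (2 ^ (m - 1) + 2) ds ds τ = 0) ∧
    (∀ τ : ℕ, 2 ^ (m - 1) + 2 - (2 ^ π (m - 3) + 1) ≤ τ → τ ≤ 2 ^ (m - 1) + 1 →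
      acorr (2 ^ (m - 1) + 2) cs ds τ + acorr (2 ^ (m - 1) + 2) ds cs τ = 0) := by
  obtain ⟨M, rfl⟩ : ∃ M, m = M + 2 := ⟨m - 2, by omega⟩
  simp only [show M + 2 - 1 = M + 1 from rfl, show M + 2 - 2 = M from rfl,
    show M + 2 - 3 = M - 1 from rfl] at hπ hg hG hG₁ hG₂ hcs hds ⊢
  have hgZ : ∀ j, (g j : ZMod 2) = pathForm M π j := fun j => by
    simp only [hg, Nat.cast_sum, Nat.cast_mul, natCast_bit, pathForm]
  have hcs' : cs = fun i => (sgn (seqC M π i) : ℂ) * omegaq q ^ c := funext fun i => by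
    rw [hcs, hG₁, hG]
    refine omegaq_pow_eq_sgn_mul (by omega) hq2 ?_
    simp only [Nat.cast_add, Nat.cast_mul, natCast_bit, natCast_one_sub_bit, hgZ, seqC, expC]
  have hds' : ds = fun i => (sgn (seqD M π i) : ℂ) * omegaq q ^ c := funext fun i => by
    rw [hds, hG₂, hG]
    refine omegaq_pow_eq_sgn_mul (by omega) hq2 ?_
    simp only [Nat.cast_add, Nat.cast_mul, natCast_bit, natCast_one_sub_bit, hgZ, seqD, seqC, expC,
      seqDiff, diffExp]
    linear_combination -(bitZ2 (i + (2 ^ M - 1)) (M + 1) * bitZ2 (i + (2 ^ M - 1)) M)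
      * CharTwo.add_self_eq_zero (1 : ZMod 2)
  simp only [hcs', hds', acorr_sgn_mul (omegaq_pow_mul_conj q c)]
  have hmaps := hπ.mapsTo
  refine ⟨fun τ hτ => ?_, fun τ h1 h2 => ?_⟩
  · rcases hτ with ⟨h1, h2⟩ | ⟨h1, h2⟩
    · exact_mod_cast corr_seqC_add_corr_seqD_eq_zero_of_le (by omega) hπ h1 h2
    · exact_mod_cast (corr_seq_eq_zero_of_ge (by omega) hmaps h1).1
  · exact_mod_cast (corr_seq_eq_zero_of_ge (by omega) hmaps h1).2
end

section
/- Let (G₁,G₂) be an (N,Z)-CZCP. Fix t∈Z_2^n and order the 2^{n+1} sequences of S_t as S_{t,i}: first ω^{(q/2)t·y}G₁ for y=0,…,2^n−1 (y in binary), then ω^{(q/2)t·y}G₂ for y=0,…,2^n−1, cyclically. Then Σ_{i=1}^{2^{n+1}} C(S_{t,i}, S_{t,i+1})(τ) = 0 for all |τ|∈{N−Z,…,N−1} (indices mod 2^{n+1}). -/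
/-!
Write `S_{t,i} = cᵢ G₁` and `S_{t,2ⁿ+i} = cᵢ G₂` with phases `cᵢ = ω^{(q/2) t·i}`, and use
`C(a x, b y) = a b̄ C(x, y)`. The consecutive pair `(i, i + 1)` of the first block together with the
same pair of the second block contributes `cᵢ c̄ᵢ₊₁ (A(G₁) + A(G₂))`, and the two pairs crossing between
the blocks contribute `c_{2ⁿ-1} c̄₀ (C(G₁, G₂) + C(G₂, G₁))`. Both brackets vanish on the tail-end
zone, whatever the phases are.
-/

open Finset Complex

open scoped ComplexConjugate

lemma acorr_const_mul (N : ℕ) (a b : ℂ) (x y : ℕ → ℂ) (τ : ℕ) :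
    acorr N (fun j => a * x j) (fun j => b * y j) τ = a * conj b * acorr N x y τ := by
  simp only [acorr, mul_sum, map_mul]
  exact sum_congr rfl fun _ _ => by ring

def blockSeq (m : ℕ) (c : ℕ → ℂ) (x y : ℕ → ℂ) (i j : ℕ) : ℂ :=
  if i < m then c i * x j else c (i - m) * y j

section blockSeq

variable {m : ℕ} {c : ℕ → ℂ} {x y : ℕ → ℂ}

lemma blockSeq_of_lt {i : ℕ} (h : i < m) : blockSeq m c x y i = fun j => c i * x j := by
  funext j
  simp [blockSeq, h]

lemma blockSeq_add (i : ℕ) : blockSeq m c x y (m + i) = fun j => c i * y j := by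
  funext j
  simp [blockSeq]

lemma sum_acorr_blockSeq_cyclic (N τ : ℕ) (hm : 0 < m) :
    ∑ i ∈ range (2 * m), acorr N (blockSeq m c x y i) (blockSeq m c x y ((i + 1) % (2 * m))) τ
      = (∑ i ∈ range (m - 1), c i * conj (c (i + 1))) * (acorr N x x τ + acorr N y y τ)
        + c (m - 1) * conj (c 0) * (acorr N x y τ + acorr N y x τ) := by
  obtain ⟨k, rfl⟩ := Nat.exists_eq_add_one_of_ne_zero hm.ne'
  rw [two_mul, sum_range_add, sum_range_succ, sum_range_succ, Nat.add_sub_cancel]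
  have first_block : ∑ i ∈ range k,
      acorr N (blockSeq (k + 1) c x y i) (blockSeq (k + 1) c x y ((i + 1) % (k + 1 + (k + 1)))) τ
        = ∑ i ∈ range k, c i * conj (c (i + 1)) * acorr N x x τ := by
    refine sum_congr rfl fun i hi => ?_
    rw [mem_range] at hi
    rw [Nat.mod_eq_of_lt (by omega), blockSeq_of_lt (by omega), blockSeq_of_lt (by omega),
      acorr_const_mul]
  have second_block : ∑ i ∈ range k,
      acorr N (blockSeq (k + 1) c x y (k + 1 + i))
        (blockSeq (k + 1) c x y ((k + 1 + i + 1) % (k + 1 + (k + 1)))) τ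
        = ∑ i ∈ range k, c i * conj (c (i + 1)) * acorr N y y τ := by
    refine sum_congr rfl fun i hi => ?_
    rw [mem_range] at hi
    rw [Nat.mod_eq_of_lt (by omega), add_assoc (k + 1), blockSeq_add, blockSeq_add,
      acorr_const_mul]
  have into_second : (k + 1) % (k + 1 + (k + 1)) = k + 1 + 0 := Nat.mod_eq_of_lt (by omega)
  have into_first : (k + 1 + k + 1) % (k + 1 + (k + 1)) = 0 := by
    rw [show k + 1 + k + 1 = k + 1 + (k + 1) by omega, Nat.mod_self]
  rw [first_block, second_block, into_second, into_first, blockSeq_of_lt (by omega),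
    blockSeq_add, blockSeq_add, blockSeq_of_lt hm, acorr_const_mul, acorr_const_mul,
    ← sum_mul, ← sum_mul]
  ring

end blockSeq

theorem stmt_13_general (q n N Z : ℕ)
    (G₁ G₂ : ℕ → ℂ)
    (hP1 : ∀ τ : ℕ, (1 ≤ τ ∧ τ ≤ Z) ∨ (N - Z ≤ τ ∧ τ ≤ N - 1) →
      acorr N G₁ G₁ τ + acorr N G₂ G₂ τ = 0)
    (hP2 : ∀ τ : ℕ, N - Z ≤ τ → τ ≤ N - 1 →
      acorr N G₁ G₂ τ + acorr N G₂ G₁ τ = 0)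
    (t : ℕ → ℕ)
    (S : ℕ → ℕ → ℂ)
    (hS : ∀ i j, S i j =
      if i < 2 ^ n then
        omegaq q ^ (q / 2 * ∑ k ∈ Finset.range n, t k * bit i k) * G₁ j
      else
        omegaq q ^ (q / 2 * ∑ k ∈ Finset.range n, t k * bit (i - 2 ^ n) k) * G₂ j) :
    ∀ τ : ℕ, N - Z ≤ τ → τ ≤ N - 1 →
      ∑ i ∈ Finset.range (2 ^ (n + 1)),
        acorr N (S i) (S ((i + 1) % 2 ^ (n + 1))) τ = 0 := by
  intro τ hτ₁ hτ₂
  have hS_eq : S = blockSeq (2 ^ n)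
      (fun i => omegaq q ^ (q / 2 * ∑ k ∈ range n, t k * bit i k)) G₁ G₂ :=
    funext fun i => funext (hS i)
  rw [hS_eq, pow_succ', sum_acorr_blockSeq_cyclic N τ (by positivity),
    hP1 τ (Or.inr ⟨hτ₁, hτ₂⟩), hP2 τ hτ₁ hτ₂]
  simp

/-- property P2: the cyclic consecutive cross-correlation sum over the
ordered set S_t vanishes on the tail-end zone. -/
theorem stmt_13 (q n N Z : ℕ) (hq : 2 ≤ q) (hq2 : 2 ∣ q)
    (G₁ G₂ : ℕ → ℂ)
    (hP1 : ∀ τ : ℕ, (1 ≤ τ ∧ τ ≤ Z) ∨ (N - Z ≤ τ ∧ τ ≤ N - 1) →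
      acorr N G₁ G₁ τ + acorr N G₂ G₂ τ = 0)
    (hP2 : ∀ τ : ℕ, N - Z ≤ τ → τ ≤ N - 1 →
      acorr N G₁ G₂ τ + acorr N G₂ G₁ τ = 0)
    (t : ℕ → ℕ) (ht : ∀ k, t k ≤ 1)
    (S : ℕ → ℕ → ℂ)
    (hS : ∀ i j, S i j =
      if i < 2 ^ n then
        omegaq q ^ (q / 2 * ∑ k ∈ Finset.range n, t k * bit i k) * G₁ j
      else
        omegaq q ^ (q / 2 * ∑ k ∈ Finset.range n, t k * bit (i - 2 ^ n) k) * G₂ j) :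
    ∀ τ : ℕ, N - Z ≤ τ → τ ≤ N - 1 →
      ∑ i ∈ Finset.range (2 ^ (n + 1)),
        acorr N (S i) (S ((i + 1) % 2 ^ (n + 1))) τ = 0 :=
  stmt_13_general q n N Z G₁ G₂ hP1 hP2 t S hS
end
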